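/- arXiv:2112.00264 — 15 statements merged into one kernel-verified Lean document; each statement's English description precedes it below -/
import Mathlib

section
/- A valuation domain is atomic if and only if it is a discrete valuation ring (i.e., Noetherian). -/
/-- An integral domain (here: commutative ring) is atomic if every nonzero nonunit
is a finite product of irreducible elements. -/
def AtomicRing (R : Type*) [CommRing R] : Prop :=
  ∀ a : R, a ≠ 0 → ¬IsUnit a →
    ∃ l : Multiset R, (∀ b ∈ l, Irreducible b) ∧ l.prod = a

/-- A ring satisfies the ascending chain condition on principal ideals (ACCP) if
every ascending chain of principal ideals stabilizes. -/
def RingACCP (R : Type*) [CommRing R] : Prop :=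
  ∀ f : ℕ → R, (∀ n, Ideal.span {f n} ≤ Ideal.span {f (n + 1)}) →
    ∃ N, ∀ n, N ≤ n → Ideal.span {f n} = Ideal.span {f N}

/-- In a valuation ring, any two irreducible elements are associated. -/
lemma assoc_of_irreducible {V : Type*} [CommRing V] [IsDomain V] [ValuationRing V]
    {p q : V} (hp : Irreducible p) (hq : Irreducible q) : Associated p q := by
  rcases ValuationRing.dvd_total p q with h | h
  · exact (hp.associated_of_dvd hq h)
  · exact (hq.associated_of_dvd hp h).symm

lemma assoc_pow_prod {V : Type*} [CommRing V] {p : V} (l : Multiset V)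
    (h : ∀ b ∈ l, Associated p b) : Associated (p ^ Multiset.card l) l.prod := by
  induction l using Multiset.induction with
  | empty => simp
  | cons a s ih =>
    rw [Multiset.prod_cons, Multiset.card_cons, pow_succ, mul_comm]
    exact (h a (Multiset.mem_cons_self a s)).mul_mul
      (ih fun b hb => h b (Multiset.mem_cons_of_mem hb))

/-- A valuation domain is atomic if and only if it is a DVR, i.e. Noetherian. -/
theorem valuation_domain_atomic_iff_noetherian (V : Type*) [CommRing V] [IsDomain V]
    [ValuationRing V] : AtomicRing V ↔ IsNoetherianRing V := by
  constructor
  · intro hA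
    by_cases hF : IsField V
    · letI := hF.toField
      infer_instance
    · obtain ⟨a, ha0, hau⟩ := Ring.exists_not_isUnit_of_not_isField hF
      obtain ⟨l, hl, hprod⟩ := hA a ha0 hau
      have hlne : l ≠ 0 := by
        rintro rfl
        exact hau (hprod ▸ isUnit_one)
      obtain ⟨p, hp⟩ := Multiset.exists_mem_of_ne_zero hlne
      have hpirr := hl p hp
      have hfac : IsDiscreteValuationRing.HasUnitMulPowIrreducibleFactorization V := by
        refine ⟨p, hpirr, fun {x} hx => ?_⟩
        by_cases hxu : IsUnit x
        · exact ⟨0, by simpa using (associated_one_iff_isUnit.2 hxu).symm⟩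
        · obtain ⟨m, hm, hmprod⟩ := hA x hx hxu
          exact ⟨Multiset.card m, hmprod ▸ assoc_pow_prod m
            (fun b hb => assoc_of_irreducible hpirr (hm b hb))⟩
      haveI := IsDiscreteValuationRing.ofHasUnitMulPowIrreducibleFactorization hfac
      exact PrincipalIdealRing.isNoetherianRing
  · intro h
    haveI := h
    intro a ha hu
    obtain ⟨f, hf, hfe, -⟩ := (WfDvdMonoid.not_unit_iff_exists_factors_eq a ha).1 hu
    exact ⟨f, hf, hfe⟩
end

section
/- If a valuation domain V is atomic, then its Krull dimension is at most 1. -/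
lemma mem_of_multiset_prod_mem {R : Type*} [CommRing R] {p : Ideal R} (hp : p.IsPrime)
    (m : Multiset R) (hm : m.prod ∈ p) : ∃ a ∈ m, a ∈ p := by
  induction m using Multiset.induction with
  | empty => simp at hm; exact absurd (p.eq_top_of_isUnit_mem hm isUnit_one) hp.ne_top
  | cons a s ih =>
    rw [Multiset.prod_cons] at hm
    rcases hp.mem_or_mem hm with h | h
    · exact ⟨a, Multiset.mem_cons_self a s, h⟩
    · obtain ⟨b, hb, hbp⟩ := ih h
      exact ⟨b, Multiset.mem_cons_of_mem hb, hbp⟩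

lemma key_bot {V : Type*} [CommRing V] [IsDomain V] [ValuationRing V]
    (h : ∀ a : V, a ≠ 0 → ¬IsUnit a →
      ∃ l : Multiset V, (∀ b ∈ l, Irreducible b) ∧ l.prod = a)
    {p q : Ideal V} (hp : p.IsPrime) (hq : q.IsPrime) (hpq : p < q) : p = ⊥ := by
  by_contra hbot
  obtain ⟨y, hy, hy0⟩ := Submodule.exists_mem_ne_zero_of_ne_bot hbot
  obtain ⟨x, hxq, hxp⟩ := SetLike.exists_of_lt hpq
  have hx0 : x ≠ 0 := fun h0 => hxp (h0 ▸ p.zero_mem)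
  have hxu : ¬IsUnit x := fun hu => hq.ne_top (q.eq_top_of_isUnit_mem hxq hu)
  have hyu : ¬IsUnit y := fun hu => hp.ne_top (p.eq_top_of_isUnit_mem hy hu)
  obtain ⟨l, hl, hlp⟩ := h x hx0 hxu
  obtain ⟨m, hmirr, hmp⟩ := h y hy0 hyu
  -- get an irreducible factor of x
  have hlne : l ≠ 0 := by
    rintro rfl
    exact hxu (hlp ▸ isUnit_one)
  obtain ⟨π, hπl⟩ := Multiset.exists_mem_of_ne_zero hlne
  have hπirr : Irreducible π := hl π hπl
  have hπx : π ∣ x := hlp ▸ Multiset.dvd_prod hπl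
  -- get an irreducible factor of y lying in p
  obtain ⟨σ, hσm, hσp⟩ := mem_of_multiset_prod_mem hp m (hmp ▸ hy)
  have hσirr : Irreducible σ := hmirr σ hσm
  -- π ∈ p, contradiction
  have hπp : π ∈ p := by
    rcases ValuationRing.dvd_total π σ with hd | hd
    · obtain ⟨c, rfl⟩ := hd
      rcases hσirr.isUnit_or_isUnit rfl with hu | hu
      · exact absurd hu hπirr.not_isUnit
      · obtain ⟨u, rfl⟩ := hu
        have : π * ↑u * ↑u⁻¹ ∈ p := Ideal.mul_mem_right _ p hσp
        simpa [mul_assoc] using this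
    · obtain ⟨c, rfl⟩ := hd
      exact Ideal.mul_mem_right _ p hσp
  obtain ⟨c, rfl⟩ := hπx
  exact hxp (Ideal.mul_mem_right _ p hπp)

theorem vkdim_aux (V : Type*) [CommRing V] [IsDomain V]
    [ValuationRing V]
    (h : ∀ a : V, a ≠ 0 → ¬IsUnit a →
      ∃ l : Multiset V, (∀ b ∈ l, Irreducible b) ∧ l.prod = a) : ringKrullDim V ≤ 1 := by
  rw [ringKrullDim, Order.krullDim]
  refine iSup_le fun p => ?_
  have hlen : p.length ≤ 1 := by
    by_contra hl
    push_neg at hl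
    have h01 : p.toFun ⟨0, by omega⟩ < p.toFun ⟨1, by omega⟩ :=
      p.strictMono (by simp [Fin.lt_def])
    have h12 : p.toFun ⟨1, by omega⟩ < p.toFun ⟨2, by omega⟩ :=
      p.strictMono (by simp [Fin.lt_def])
    have h1bot : (p.toFun ⟨1, by omega⟩).asIdeal = ⊥ :=
      key_bot h (p.toFun ⟨1, by omega⟩).isPrime (p.toFun ⟨2, by omega⟩).isPrime
        ((PrimeSpectrum.asIdeal_lt_asIdeal _ _).mpr h12)
    have h01' : (p.toFun ⟨0, by omega⟩).asIdeal < (p.toFun ⟨1, by omega⟩).asIdeal :=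
      (PrimeSpectrum.asIdeal_lt_asIdeal _ _).mpr h01
    rw [h1bot] at h01'
    exact not_lt_bot h01'
  exact_mod_cast hlen

/-- If a valuation domain is atomic, then its Krull dimension is at most 1. -/
theorem valuation_domain_atomic_krullDim_le_one (V : Type*) [CommRing V] [IsDomain V]
    [ValuationRing V] (h : AtomicRing V) : ringKrullDim V ≤ 1 := by
  exact vkdim_aux V h
end

section
/- A valuation domain that is discrete and Archimedean is Noetherian (hence a DVR or a field). -/
/-- A valuation domain that is discrete (there is an element of minimal positive value,
i.e. a nonzero nonunit dividing every nonzero nonunit, whenever a nonzero nonunit exists)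
and Archimedean is Noetherian. -/
theorem valuation_domain_discrete_archimedean_noetherian (V : Type*) [CommRing V]
    [IsDomain V] [ValuationRing V]
    (hdisc : ∀ x : V, x ≠ 0 → ¬IsUnit x →
      ∃ π : V, π ≠ 0 ∧ ¬IsUnit π ∧ ∀ y : V, y ≠ 0 → ¬IsUnit y → π ∣ y)
    (harch : ∀ x : V, ¬IsUnit x → ∀ y : V, (∀ n : ℕ, x ^ n ∣ y) → y = 0) :
    IsNoetherianRing V := by
  classical
  rw [isNoetherianRing_iff_ideal_fg]
  by_cases hne : ∃ x : V, x ≠ 0 ∧ ¬IsUnit x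
  · obtain ⟨x0, hx0, hxu⟩ := hne
    obtain ⟨π, hπ0, hπu, hπdvd⟩ := hdisc x0 hx0 hxu
    -- every nonzero element is a unit times a power of π
    have hfact : ∀ x : V, x ≠ 0 → ∃ (n : ℕ) (u : V), IsUnit u ∧ x = u * π ^ n := by
      intro x hx
      have h1 : ∃ n, ¬ π ^ n ∣ x := by
        by_contra h
        push_neg at h
        exact hx (harch π hπu x h)
      have hm0 : Nat.find h1 ≠ 0 := by
        intro h
        have := Nat.find_spec h1
        rw [h, pow_zero] at this
        exact this (one_dvd x)
      obtain ⟨m, hm⟩ := Nat.exists_eq_succ_of_ne_zero hm0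
      have hdvd : π ^ m ∣ x := by
        by_contra h
        have := Nat.find_min' h1 h
        omega
      have hndvd : ¬ π ^ (m + 1) ∣ x := by
        have := Nat.find_spec h1
        rwa [hm] at this
      obtain ⟨c, hc⟩ := hdvd
      have hc0 : c ≠ 0 := by
        rintro rfl
        rw [mul_zero] at hc
        exact hx hc
      refine ⟨m, c, ?_, by rw [hc, mul_comm]⟩
      by_contra hcu
      obtain ⟨d, hd⟩ := hπdvd c hc0 hcu
      exact hndvd ⟨d, by rw [hc, hd, pow_succ]; ring⟩
    intro I
    by_cases hI : I = ⊥
    · rw [hI]; exact Submodule.fg_bot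
    · -- I contains some π ^ n
      have hS : ∃ n : ℕ, π ^ n ∈ I := by
        obtain ⟨x, hxI, hx0⟩ := Submodule.exists_mem_ne_zero_of_ne_bot hI
        obtain ⟨n, u, hu, hxe⟩ := hfact x hx0
        obtain ⟨u', hu'⟩ := hu
        refine ⟨n, ?_⟩
        have : π ^ n = (↑u'⁻¹ : V) * x := by
          rw [hxe, ← hu', ← mul_assoc, Units.inv_mul, one_mul]
        rw [this]
        exact I.smul_mem _ hxI
      set n := Nat.find hS with hn
      refine ⟨{π ^ n}, ?_⟩
      simp only [Finset.coe_singleton]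
      apply le_antisymm
      · rw [Ideal.span_singleton_le_iff_mem]
        exact Nat.find_spec hS
      · intro y hy
        by_cases hy0 : y = 0
        · simp [hy0]
        obtain ⟨m, u, hu, hye⟩ := hfact y hy0
        obtain ⟨u', hu'⟩ := hu
        have hmI : π ^ m ∈ I := by
          have : π ^ m = (↑u'⁻¹ : V) * y := by
            rw [hye, ← hu', ← mul_assoc, Units.inv_mul, one_mul]
          rw [this]
          exact I.smul_mem _ hy
        have hnm : n ≤ m := Nat.find_min' hS hmI
        rw [Ideal.mem_span_singleton]
        refine ⟨u * π ^ (m - n), ?_⟩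
        have h2 : π ^ m = π ^ n * π ^ (m - n) := by
          rw [← pow_add]; congr 1; omega
        rw [hye, h2]; ring
  · -- every nonzero element is a unit: field case
    push_neg at hne
    intro I
    by_cases hI : I = ⊥
    · rw [hI]; exact Submodule.fg_bot
    · obtain ⟨x, hxI, hx0⟩ := Submodule.exists_mem_ne_zero_of_ne_bot hI
      have : I = ⊤ := Ideal.eq_top_of_isUnit_mem I hxI (hne x hx0)
      rw [this]
      exact ⟨{1}, by simp⟩
end

section
/- If R is an integral domain satisfying the ascending chain condition on principal ideals (ACCP) and S is a subring of R such that the units of S are exactly the units of R that lie in S (i.e., S^× = R^× ∩ S), then S satisfies ACCP. -/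
/-- If R satisfies ACCP and S is a subring with S^× = R^× ∩ S, then S satisfies ACCP. -/
theorem accp_subring_of_units_eq (R : Type*) [CommRing R] [IsDomain R]
    (hR : RingACCP R) (S : Subring R)
    (hu : ∀ s : S, IsUnit (s : R) → IsUnit s) : RingACCP S := by
  intro f hf
  -- divisibility form of the chain in S
  have hdvd : ∀ n, f (n + 1) ∣ f n := fun n =>
    (Ideal.span_singleton_le_span_singleton).mp (hf n)
  have hdvd' : ∀ m n, m ≤ n → f n ∣ f m := by
    intro m n h
    induction n with
    | zero => simp [Nat.le_zero.mp h]
    | succ k ih =>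
      rcases Nat.lt_or_ge m (k + 1) with h' | h'
      · exact dvd_trans (hdvd k) (ih (Nat.lt_succ_iff.mp h'))
      · have : m = k + 1 := le_antisymm h h'
        simp [this]
  -- the chain in R
  have hfR : ∀ n, Ideal.span {(f n : R)} ≤ Ideal.span {(f (n + 1) : R)} := by
    intro n
    rw [Ideal.span_singleton_le_span_singleton]
    exact_mod_cast map_dvd S.subtype (hdvd n)
  obtain ⟨N, hN⟩ := hR (fun n => (f n : R)) hfR
  refine ⟨N, fun n hn => ?_⟩
  rw [Ideal.span_singleton_eq_span_singleton]
  -- f N = f n * c in S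
  obtain ⟨c, hc⟩ := hdvd' N n hn
  -- in R, g N ∣ g n
  have hRdvd : (f N : R) ∣ (f n : R) := by
    have := (hN n hn).le
    rw [Ideal.span_singleton_le_span_singleton] at this
    exact this
  by_cases hz : (f n : R) = 0
  · have h0 : (f n : S) = 0 := Subtype.ext hz
    have : f N = 0 := by rw [hc, h0, zero_mul]
    rw [this, h0]
  · -- c is a unit in R: f n = f N * d = f n * c * d
    obtain ⟨d, hd⟩ := hRdvd
    have hcR : (f n : R) * ((c : R) * d) = (f n : R) * 1 := by
      have : (f N : R) = (f n : R) * (c : R) := by exact_mod_cast Subtype.ext_iff.mp hc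
      rw [mul_one, ← mul_assoc, ← this, ← hd]
    have hcu : IsUnit (c : R) := IsUnit.of_mul_eq_one _
      (by have := mul_left_cancel₀ hz hcR; exact this)
    have hcS : IsUnit c := hu c hcu
    exact ⟨hcS.unit, by rw [hc]; rfl⟩
end

section
/- If R is an integral domain satisfying ACCP and S is a subring of R such that every unit of R is integral over S, then S satisfies ACCP. -/
/-- Key lemma: if every unit of `R` is integral over `S`, then an element of `S` which is a
unit of `R` is already a unit of `S` (its inverse lies in `S`). -/
theorem isUnit_in_subring_of_units_integral {R : Type*} [CommRing R] [Nontrivial R]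
    (S : Subring R) (hu : ∀ u : R, IsUnit u → S.subtype.IsIntegralElem u)
    (c : S) (hc : IsUnit (c : R)) : IsUnit c := by
  obtain ⟨u, huc⟩ := hc
  set v : R := ↑u⁻¹ with hv
  have hvc : v * (c : R) = 1 := by rw [← huc]; exact u.inv_mul
  obtain ⟨p, hp, hpv⟩ := hu v (u⁻¹).isUnit
  set n := p.natDegree with hndef
  have hn : 1 ≤ n := by
    by_contra h
    push_neg at h
    have hn0 : p.natDegree = 0 := by omega
    have : p = 1 := (Polynomial.Monic.natDegree_eq_zero hp).mp hn0
    rw [this] at hpv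
    simp at hpv
  have hsum : ∑ i ∈ Finset.range (n + 1), (p.coeff i : R) * v ^ i = 0 := by
    have h := Polynomial.eval₂_eq_sum_range (S.subtype) v (p := p)
    rw [hpv] at h
    simpa using h.symm
  have vici : ∀ i : ℕ, v ^ i * (c : R) ^ i = 1 := by
    intro i; rw [← mul_pow, hvc, one_pow]
  have key : ∀ k : ℕ, v ^ (k + 1) * (c : R) ^ k = v := by
    intro k
    induction k with
    | zero => simp
    | succ k ih =>
      have h2 : v ^ (k + 2) * (c : R) ^ (k + 1) = (v ^ (k + 1) * (c : R) ^ k) * (v * (c : R)) := by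
        ring
      rw [h2, hvc, mul_one, ih]
  have hvS : v ∈ S := by
    have h1 : (∑ i ∈ Finset.range (n + 1), (p.coeff i : R) * v ^ i) * (c : R) ^ (n - 1) = 0 := by
      rw [hsum, zero_mul]
    rw [Finset.sum_range_succ, add_mul, Finset.sum_mul] at h1
    have hcn : (p.coeff n : R) = 1 := by
      have := hp.coeff_natDegree
      rw [← hndef] at this
      rw [this]; simp
    have hlast : (p.coeff n : R) * v ^ n * (c : R) ^ (n - 1) = v := by
      rw [hcn, one_mul]
      have : n = (n - 1) + 1 := by omega
      rw [this]
      exact key (n - 1)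
    rw [hlast] at h1
    have hterms : ∀ i ∈ Finset.range n,
        (p.coeff i : R) * v ^ i * (c : R) ^ (n - 1) = (p.coeff i : R) * (c : R) ^ (n - 1 - i) := by
      intro i hi
      rw [Finset.mem_range] at hi
      have hsplit : (c : R) ^ (n - 1) = (c : R) ^ i * (c : R) ^ (n - 1 - i) := by
        rw [← pow_add]
        congr 1
        omega
      rw [hsplit]
      calc (p.coeff i : R) * v ^ i * ((c : R) ^ i * (c : R) ^ (n - 1 - i))
          = (p.coeff i : R) * (v ^ i * (c : R) ^ i) * (c : R) ^ (n - 1 - i) := by ring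
        _ = (p.coeff i : R) * (c : R) ^ (n - 1 - i) := by rw [vici, mul_one]
    rw [Finset.sum_congr rfl hterms] at h1
    have hveq : v = -∑ i ∈ Finset.range n, (p.coeff i : R) * (c : R) ^ (n - 1 - i) := by
      linear_combination h1
    rw [hveq]
    exact S.neg_mem (S.sum_mem (fun i _ =>
      S.mul_mem (p.coeff i).2 (S.pow_mem c.2 _)))
  rw [isUnit_iff_exists_inv']
  exact ⟨⟨v, hvS⟩, Subtype.ext (by simpa using hvc)⟩

/-- If R satisfies ACCP and S is a subring such that every unit of R is integral over S,
then S satisfies ACCP. -/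
theorem accp_subring_of_units_integral (R : Type*) [CommRing R] [IsDomain R]
    (hR : RingACCP R) (S : Subring R)
    (hu : ∀ u : R, IsUnit u → S.subtype.IsIntegralElem u) : RingACCP S := by
  intro f hf
  set g : ℕ → R := fun n => ↑(f n) with hg
  have hdvdS : ∀ n, f (n + 1) ∣ f n := fun n =>
    Ideal.span_singleton_le_span_singleton.mp (hf n)
  have hchainR : ∀ n, Ideal.span {g n} ≤ Ideal.span {g (n + 1)} := by
    intro n
    rw [Ideal.span_singleton_le_span_singleton]
    obtain ⟨d, hd⟩ := hdvdS n
    exact ⟨↑d, by exact_mod_cast congrArg (S.subtype) hd⟩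
  obtain ⟨N, hN⟩ := hR g hchainR
  refine ⟨N, fun n hn => ?_⟩
  -- f n divides f N in S
  have hfdvd : f n ∣ f N := by
    induction n, hn using Nat.le_induction with
    | base => exact dvd_refl _
    | succ m hm ih => exact dvd_trans (hdvdS m) ih
  have hassoc : Associated (g n) (g N) :=
    Ideal.span_singleton_eq_span_singleton.mp (hN n hn)
  by_cases h0 : g N = 0
  · have hgn : g n = 0 := by
      rw [h0] at hassoc
      exact (associated_zero_iff_eq_zero _).mp hassoc
    have : f n = f N := Subtype.ext (by rw [show ((f n : R)) = g n from rfl, hgn,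
      show ((f N : R)) = g N from rfl, h0])
    rw [this]
  · obtain ⟨c, hc⟩ := hfdvd
    have hgnne : g n ≠ 0 := by
      intro h
      rw [h] at hassoc
      exact h0 ((associated_zero_iff_eq_zero _).mp hassoc.symm)
    obtain ⟨w, hw⟩ := hassoc
    have hgR : g N = g n * (c : R) := by exact_mod_cast congrArg (S.subtype) hc
    have hcw : (c : R) = (w : R) := by
      have : g n * (c : R) = g n * (w : R) := by rw [← hgR, hw]
      exact mul_left_cancel₀ hgnne this
    have hcunit : IsUnit (c : R) := by rw [hcw]; exact w.isUnit
    have hcS : IsUnit c := isUnit_in_subring_of_units_integral S hu c hcunit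
    have : Associated (f n) (f N) := ⟨hcS.unit, by rw [hcS.unit_spec]; exact hc.symm⟩
    exact Ideal.span_singleton_eq_span_singleton.mpr this
end

section
/- The polynomial ring ℤ[x₁,...,xₙ] is hereditarily atomic: every subring of ℤ[x₁,...,xₙ] is atomic (indeed satisfies ACCP). -/
/-- The only units of `ℤ[x₁,...,xₙ]` are `±1`. -/
lemma mvPolynomial_int_isUnit_eq (n : ℕ) (x : MvPolynomial (Fin n) ℤ) (hx : IsUnit x) :
    x = 1 ∨ x = -1 := by
  induction n with
  | zero =>
    have h := hx.map (MvPolynomial.isEmptyRingEquiv ℤ (Fin 0)).toRingHom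
    rcases Int.isUnit_iff.1 h with h1 | h1
    · left
      apply (MvPolynomial.isEmptyRingEquiv ℤ (Fin 0)).injective
      simpa using h1
    · right
      apply (MvPolynomial.isEmptyRingEquiv ℤ (Fin 0)).injective
      simpa using h1
  | succ m ih =>
    have hu : IsUnit ((MvPolynomial.finSuccEquiv ℤ m) x) :=
      hx.map (MvPolynomial.finSuccEquiv ℤ m).toAlgHom.toRingHom
    obtain ⟨r, hr, hC⟩ := Polynomial.isUnit_iff.1 hu
    rcases ih r hr with rfl | rfl
    · left
      apply (MvPolynomial.finSuccEquiv ℤ m).injective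
      rw [← hC]; simp
    · right
      apply (MvPolynomial.finSuccEquiv ℤ m).injective
      rw [← hC]; simp


/-- The polynomial ring ℤ[x₁,...,xₙ] is hereditarily atomic: every subring is atomic,
and indeed satisfies ACCP. -/
theorem mvPolynomial_int_hereditarily_atomic (n : ℕ)
    (S : Subring (MvPolynomial (Fin n) ℤ)) : AtomicRing S ∧ RingACCP S := by
  classical
  -- units of the ambient polynomial ring are ±1, which belong to S and are units there
  have unit_mem : ∀ x : S, IsUnit (x : MvPolynomial (Fin n) ℤ) → IsUnit x := by
    intro x hx
    rcases mvPolynomial_int_isUnit_eq n x hx with h | h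
    · have hx1 : x = 1 := Subtype.ext (by simpa using h)
      rw [hx1]; exact isUnit_one
    · have hx1 : x = -1 := Subtype.ext (by simpa using h)
      rw [hx1]; exact isUnit_one.neg
  -- strict divisibility in S maps to strict divisibility in the ambient ring
  have hdnu : ∀ a b : S, DvdNotUnit a b →
      DvdNotUnit (a : MvPolynomial (Fin n) ℤ) (b : MvPolynomial (Fin n) ℤ) := by
    rintro a b ⟨ha, x, hx, rfl⟩
    refine ⟨fun h => ha (Subtype.ext (by simpa using h)), x,
      fun h => hx (unit_mem x h), by push_cast; ring⟩
  haveI wf : WfDvdMonoid S :=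
    ⟨Subrelation.wf (fun {a b} h => hdnu _ _ h)
      (InvImage.wf (fun s : S => (s : MvPolynomial (Fin n) ℤ))
        (wellFounded_dvdNotUnit (α := MvPolynomial (Fin n) ℤ)))⟩
  constructor
  · -- Atomicity
    intro a ha hau
    obtain ⟨l, hl, hlp, -⟩ := (WfDvdMonoid.not_unit_iff_exists_factors_eq a ha).1 hau
    exact ⟨l, hl, hlp⟩
  · -- ACCP
    intro f hf
    have hacc : WellFounded (α := {I : Ideal S // I.IsPrincipal}) (· > ·) :=
      Ideal.setOf_isPrincipal_wellFoundedOn_gt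
    have mono : ∀ a b : ℕ, a ≤ b → Ideal.span {f a} ≤ Ideal.span {f b} := by
      intro a b hab
      induction hab with
      | refl => exact le_refl _
      | step h ih => exact le_trans ih (hf _)
    let g : ℕ →o {I : Ideal S // I.IsPrincipal} :=
      ⟨fun k => ⟨Ideal.span {f k}, ⟨f k, rfl⟩⟩, fun a b hab => mono a b hab⟩
    obtain ⟨N, hN⟩ := wellFoundedGT_iff_monotone_chain_condition.1 ⟨hacc⟩ g
    exact ⟨N, fun m hm => (Subtype.ext_iff.1 (hN m hm)).symm⟩
end

section
/- For a field F, the polynomial ring F[x] is hereditarily atomic if and only if F is an algebraic extension of a finite prime field 𝔽_p. -/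
open Polynomial

section Aux

variable {F : Type*} [Field F]

/-- In a field of prime characteristic, any nonzero integer cast is invertible by
another integer cast. -/
lemma aux_int_inv {p : ℕ} (hp : p.Prime) [CharP F p] {m : ℤ} (hm : (m : F) ≠ 0) :
    ∃ n : ℤ, (n : F) * (m : F) = 1 := by
  have hpm : ¬ (p : ℤ) ∣ m := fun h => hm ((CharP.intCast_eq_zero_iff F p m).2 h)
  have hcop : IsCoprime (m : ℤ) (p : ℤ) := by
    rw [Int.isCoprime_iff_gcd_eq_one]
    have h1 : ¬ p ∣ m.natAbs := by
      intro h
      exact hpm (Int.dvd_natAbs.1 (Int.natCast_dvd_natCast.2 h))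
    have h2 : Nat.Coprime p m.natAbs := (Nat.Prime.coprime_iff_not_dvd hp).2 h1
    simpa [Int.gcd, Nat.coprime_comm] using h2
  obtain ⟨u, v, huv⟩ := hcop
  refine ⟨u, ?_⟩
  have := congrArg (fun z : ℤ => (z : F)) huv
  push_cast at this
  rw [CharP.cast_eq_zero F p] at this
  simpa using this

lemma eval_mem_closure (a : F) (g : F[X]) (hg : ∀ i, ∃ n : ℤ, g.coeff i = (n : F)) :
    g.eval a ∈ Subring.closure {a} := by
  rw [eval_eq_sum_range]
  refine Subring.sum_mem _ fun i _ => ?_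
  obtain ⟨n, hn⟩ := hg i
  rw [hn]
  exact Subring.mul_mem _ (intCast_mem _ n)
    (Subring.pow_mem _ (Subring.subset_closure (Set.mem_singleton a)) i)

lemma aux_root {p : ℕ} (hp : p.Prime) [CharP F p] {a : F} (ha : a ≠ 0) :
    ∀ N (g : F[X]), g.natDegree ≤ N → g ≠ 0 → (∀ i, ∃ n : ℤ, g.coeff i = (n : F)) →
      g.eval a = 0 → a⁻¹ ∈ Subring.closure {a} := by
  intro N
  induction N with
  | zero =>
    intro g hdeg hg0 _ heval
    obtain ⟨c, hc⟩ := natDegree_eq_zero.1 (Nat.le_zero.1 hdeg)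
    exfalso
    apply hg0
    rw [← hc] at heval ⊢
    simp only [eval_C] at heval
    rw [heval, map_zero]
  | succ N ih =>
    intro g hdeg hg0 hcoeff heval
    have hsplit := congrArg (eval a) (divX_mul_X_add g)
    simp only [eval_add, eval_mul, eval_X, eval_C] at hsplit
    rw [heval] at hsplit
    by_cases h0 : g.coeff 0 = 0
    · rw [h0, add_zero] at hsplit
      have hdvx : g.divX.eval a = 0 := by
        rcases mul_eq_zero.1 hsplit with h | h
        · exact h
        · exact absurd h ha
      have hne : g.divX ≠ 0 := by
        intro h
        apply hg0
        have := divX_mul_X_add g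
        rw [h, h0] at this
        simpa using this.symm
      have hlt : g.divX.natDegree < g.natDegree :=
        natDegree_lt_natDegree hne (degree_divX_lt hg0)
      refine ih g.divX (by omega) hne (fun i => ?_) hdvx
      rw [coeff_divX]
      exact hcoeff (i + 1)
    · obtain ⟨m, hm⟩ := hcoeff 0
      have hmF : (m : F) ≠ 0 := by rw [← hm]; exact h0
      obtain ⟨n, hn⟩ := aux_int_inv hp hmF
      have key : a * g.divX.eval a = -(m : F) := by
        rw [hm] at hsplit
        linear_combination hsplit
      have hone : a * (-(n : F) * g.divX.eval a) = 1 := by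
        have h2 : a * (-(n : F) * g.divX.eval a) = (n : F) * -(a * g.divX.eval a) := by ring
        rw [h2, key, neg_neg, hn]
      rw [inv_eq_of_mul_eq_one_right hone, neg_mul]
      exact Subring.neg_mem _ (Subring.mul_mem _ (intCast_mem _ n)
        (eval_mem_closure a _ (fun i => by rw [coeff_divX]; exact hcoeff (i + 1))))

lemma inv_mem_closure {p : ℕ} (hp : p.Prime) [CharP F p]
    (hint : ∀ x : F, IsIntegral ℤ x) {a : F} (ha : a ≠ 0) :
    a⁻¹ ∈ Subring.closure {a} := by
  obtain ⟨P, hPm, hPe⟩ := hint a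
  refine aux_root hp ha (P.map (Int.castRingHom F)).natDegree _ le_rfl
    (hPm.map _).ne_zero (fun i => ⟨P.coeff i, coeff_map _ _⟩) ?_
  rw [eval_map]
  rw [algebraMap_int_eq] at hPe
  exact hPe

/-- Every nonzero constant in a subring of `F[X]` is a unit of that subring. -/
lemma const_unit {p : ℕ} (hp : p.Prime) [CharP F p] (hint : ∀ x : F, IsIntegral ℤ x)
    (S : Subring F[X]) (g : S) (hg0 : (g : F[X]) ≠ 0) (hgd : (g : F[X]).natDegree = 0) :
    IsUnit g := by
  obtain ⟨c, hc⟩ := natDegree_eq_zero.1 hgd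
  have hcne : c ≠ 0 := by
    intro h
    apply hg0
    rw [← hc, h, map_zero]
  have h1 : c⁻¹ ∈ Subring.closure {c} := inv_mem_closure hp hint hcne
  have hcS : c ∈ S.comap (C : F →+* F[X]) := by
    show C c ∈ S
    rw [hc]
    exact g.2
  have h2 : Subring.closure {c} ≤ S.comap (C : F →+* F[X]) :=
    Subring.closure_le.2 (Set.singleton_subset_iff.2 hcS)
  have h3 : C c⁻¹ ∈ S := h2 h1
  rw [isUnit_iff_exists_inv]
  refine ⟨⟨C c⁻¹, h3⟩, Subtype.ext ?_⟩
  show (g : F[X]) * C c⁻¹ = 1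
  rw [← hc, ← C_mul, mul_inv_cancel₀ hcne, C_1]

/-- Reverse direction: if `F` is an algebraic extension of `𝔽_p`, every subring of
`F[X]` is atomic. -/
lemma atomic_of_alg {p : ℕ} (hp : p.Prime) [CharP F p]
    (hint : ∀ x : F, IsIntegral ℤ x) (S : Subring F[X]) : AtomicRing S := by
  suffices H : ∀ n (a : S), (a : F[X]).natDegree ≤ n → a ≠ 0 → ¬IsUnit a →
      ∃ l : Multiset S, (∀ b ∈ l, Irreducible b) ∧ l.prod = a by
    intro a ha hu
    exact H _ a le_rfl ha hu
  intro n
  induction n using Nat.strong_induction_on with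
  | _ n ih =>
    intro a hdeg ha hu
    by_cases hirr : Irreducible a
    · exact ⟨{a}, by simpa using hirr, by simp⟩
    rw [irreducible_iff] at hirr
    push_neg at hirr
    obtain ⟨b, c, habc, hb, hc⟩ := hirr hu
    have hb0 : b ≠ 0 := by
      rintro rfl
      rw [zero_mul] at habc
      exact ha habc
    have hc0 : c ≠ 0 := by
      rintro rfl
      rw [mul_zero] at habc
      exact ha habc
    have hbF : (b : F[X]) ≠ 0 := fun h => hb0 (Subtype.ext h)
    have hcF : (c : F[X]) ≠ 0 := fun h => hc0 (Subtype.ext h)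
    have hbd : 1 ≤ (b : F[X]).natDegree := by
      by_contra h
      push_neg at h
      exact hb (const_unit hp hint S b hbF (by omega))
    have hcd : 1 ≤ (c : F[X]).natDegree := by
      by_contra h
      push_neg at h
      exact hc (const_unit hp hint S c hcF (by omega))
    have hsum : (a : F[X]).natDegree = (b : F[X]).natDegree + (c : F[X]).natDegree := by
      rw [habc]
      push_cast
      exact natDegree_mul hbF hcF
    obtain ⟨lb, hlb, hlbp⟩ := ih (b : F[X]).natDegree (by omega) b le_rfl hb0 hb
    obtain ⟨lc, hlc, hlcp⟩ := ih (c : F[X]).natDegree (by omega) c le_rfl hc0 hc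
    refine ⟨lb + lc, ?_, ?_⟩
    · intro x hx
      rcases Multiset.mem_add.1 hx with h | h
      · exact hlb x h
      · exact hlc x h
    · rw [Multiset.prod_add, hlbp, hlcp, habc]

/-- Forward direction key step: if `c ≠ 0` and `c⁻¹` is not in the subring generated
by `c`, then some subring of `F[X]` is not atomic. -/
lemma not_atomic_of_inv_not_mem {c : F} (hc0 : c ≠ 0)
    (hc : c⁻¹ ∉ Subring.closure {c}) :
    ∃ S : Subring F[X], ¬ AtomicRing S := by
  set S : Subring F[X] := (Subring.closure {c}).comap constantCoeff with hS
  refine ⟨S, fun hA => ?_⟩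
  have hXmem : (X : F[X]) ∈ S := by
    show constantCoeff (X : F[X]) ∈ Subring.closure {c}
    rw [constantCoeff_apply, coeff_X_zero]
    exact Subring.zero_mem _
  have hX0 : (⟨X, hXmem⟩ : S) ≠ 0 := by
    intro h
    exact X_ne_zero (congrArg Subtype.val h)
  have hXu : ¬ IsUnit (⟨X, hXmem⟩ : S) := by
    intro h
    exact Polynomial.not_isUnit_X (h.map S.subtype)
  obtain ⟨l, hl, hlp⟩ := hA ⟨X, hXmem⟩ hX0 hXu
  have hne : ∀ b ∈ l, constantCoeff (b : F[X]) ≠ 0 := by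
    intro b hb hb0
    have hirr := hl b hb
    have hCc : C c ∈ S := by
      show constantCoeff (C c) ∈ Subring.closure {c}
      rw [constantCoeff_apply, coeff_C_zero]
      exact Subring.subset_closure (Set.mem_singleton c)
    have hCb : C c⁻¹ * (b : F[X]) ∈ S := by
      show constantCoeff (C c⁻¹ * (b : F[X])) ∈ Subring.closure {c}
      rw [map_mul, constantCoeff_apply, coeff_C_zero, hb0, mul_zero]
      exact Subring.zero_mem _
    have hfac : b = ⟨C c, hCc⟩ * ⟨C c⁻¹ * (b : F[X]), hCb⟩ := by
      refine Subtype.ext ?_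
      show (b : F[X]) = C c * (C c⁻¹ * (b : F[X]))
      rw [← mul_assoc, ← C_mul, mul_inv_cancel₀ hc0, C_1, one_mul]
    rcases hirr.isUnit_or_isUnit hfac with h | h
    · obtain ⟨v, hv⟩ := isUnit_iff_exists_inv.1 h
      have hv' : C c * (v : F[X]) = 1 := congrArg Subtype.val hv
      have hcv : constantCoeff (v : F[X]) = c⁻¹ := by
        have h2 := congrArg constantCoeff hv'
        rw [map_mul, constantCoeff_apply, coeff_C_zero, map_one] at h2
        exact (inv_eq_of_mul_eq_one_right h2).symm
      exact hc (hcv ▸ v.2)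
    · obtain ⟨r, hr, hrc⟩ := Polynomial.isUnit_iff.1 (h.map S.subtype)
      have hr0 : r = 0 := by
        have hrc2 : C r = C c⁻¹ * (b : F[X]) := hrc
        have h2 := congrArg constantCoeff hrc2
        rw [constantCoeff_apply, coeff_C_zero, map_mul, constantCoeff_apply, coeff_C_zero,
          hb0, mul_zero] at h2
        exact h2
      rw [hr0] at hr
      exact not_isUnit_zero hr
  have hprod : constantCoeff ((l.map S.subtype).prod) = 0 := by
    have : (l.map S.subtype).prod = (X : F[X]) := by
      rw [← map_multiset_prod, hlp]
      rfl
    rw [this, constantCoeff_apply, coeff_X_zero]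
  rw [map_multiset_prod] at hprod
  rw [Multiset.prod_eq_zero_iff] at hprod
  rw [Multiset.map_map, Multiset.mem_map] at hprod
  obtain ⟨b, hb, hb0⟩ := hprod
  exact hne b hb hb0

end Aux

/-- For a field F, the polynomial ring F[x] is hereditarily atomic if and only if
F is an algebraic extension of 𝔽_p for some prime p (equivalently, F has prime
characteristic and every element is integral over ℤ). -/
theorem polynomial_hereditarily_atomic_iff (F : Type*) [Field F] :
    (∀ S : Subring (Polynomial F), AtomicRing S) ↔
      ∃ p : ℕ, p.Prime ∧ CharP F p ∧ ∀ x : F, IsIntegral ℤ x := by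
  constructor
  · intro h
    by_contra hcon
    obtain ⟨q, hq⟩ := CharP.exists F
    rcases CharP.char_is_prime_or_zero F q with hqp | hq0
    · have hx : ¬ ∀ x : F, IsIntegral ℤ x := fun hall => hcon ⟨q, hqp, hq, hall⟩
      push_neg at hx
      obtain ⟨c, hcint⟩ := hx
      have hc0 : c ≠ 0 := fun h => hcint (h ▸ isIntegral_zero)
      have hcinv : c⁻¹ ∉ Subring.closure {c} := by
        intro hmem
        apply hcint
        have h1 : Subring.closure {c} ≤ (Algebra.adjoin ℤ {c}).toSubring :=
          Subring.closure_le.2 (fun x hx => Algebra.subset_adjoin hx)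
        have h2 : c⁻¹ ∈ Algebra.adjoin ℤ {c} := h1 hmem
        rw [Algebra.adjoin_singleton_eq_range_aeval] at h2
        obtain ⟨g, hg⟩ := h2
        have hg2 : (aeval c) g = c⁻¹ := hg
        have key : (aeval c) ((X : ℤ[X]) * g - 1) = 0 := by
          rw [map_sub, map_mul, aeval_X, map_one, hg2, mul_inv_cancel₀ hc0, sub_self]
        haveI : Fact q.Prime := ⟨hqp⟩
        letI := ZMod.algebra F q
        set g' := ((X : ℤ[X]) * g - 1).map (algebraMap ℤ (ZMod q)) with hg'
        have hg'0 : g' ≠ 0 := by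
          intro hzero
          have h3 : g'.coeff 0 = algebraMap ℤ (ZMod q) (((X : ℤ[X]) * g - 1).coeff 0) :=
            coeff_map _ _
          rw [hzero] at h3
          have h4 : ((X : ℤ[X]) * g - 1).coeff 0 = -1 := by
            rw [coeff_sub, mul_coeff_zero, coeff_X_zero, zero_mul, coeff_one]
            norm_num
          rw [h4] at h3
          simp at h3
        have halg : IsAlgebraic (ZMod q) c :=
          ⟨g', hg'0, by rw [hg', aeval_map_algebraMap]; exact key⟩
        have hintc : IsIntegral (ZMod q) c := halg.isIntegral
        obtain ⟨Q, hQmap, _, hQmonic⟩ :=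
          Polynomial.lifts_and_degree_eq_and_monic
            (f := Int.castRingHom (ZMod q))
            ((Polynomial.lifts_iff_coeff_lifts _).2
              (fun n => ZMod.intCast_surjective _))
            (minpoly.monic hintc)
        refine ⟨Q, hQmonic, ?_⟩
        have hQ : (aeval c) Q = 0 := by
          have h5 : (aeval c) (Q.map (algebraMap ℤ (ZMod q))) = (aeval c) Q :=
            aeval_map_algebraMap _ _ _
          rw [← h5]
          rw [show algebraMap ℤ (ZMod q) = Int.castRingHom (ZMod q) from algebraMap_int_eq _]
          rw [hQmap]
          exact minpoly.aeval _ _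
        rw [← aeval_def]
        exact hQ
      obtain ⟨S, hS⟩ := not_atomic_of_inv_not_mem hc0 hcinv
      exact hS (h S)
    · subst hq0
      haveI : CharZero F := CharP.charP_to_charZero F
      have hc0 : (2 : F) ≠ 0 := two_ne_zero
      have hcinv : (2 : F)⁻¹ ∉ Subring.closure {(2 : F)} := by
        intro hmem
        have hsub : Subring.closure {(2 : F)} ≤ (Int.castRingHom F).range := by
          rw [Subring.closure_le]
          intro x hx
          rw [Set.mem_singleton_iff] at hx
          subst hx
          exact ⟨2, by simp⟩
        obtain ⟨n, hn⟩ := hsub hmem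
        have hn2 : ((n : ℤ) : F) = (2 : F)⁻¹ := hn
        have h2 : ((2 * n : ℤ) : F) = ((1 : ℤ) : F) := by
          push_cast
          rw [hn2]
          rw [mul_inv_cancel₀ hc0]
        have := Int.cast_injective h2
        omega
      obtain ⟨S, hS⟩ := not_atomic_of_inv_not_mem hc0 hcinv
      exact hS (h S)
  · rintro ⟨p, hp, hchar, hint⟩ S
    haveI := hchar
    exact atomic_of_alg hp hint S
end

section
/- If F is an algebraic extension of 𝔽_p, then the polynomial ring F[x₁,...,xₙ] in any finite number of variables is hereditarily atomic. -/
theorem isMulTorsion_units_of_isIntegral {k K : Type*} [Field k] [Finite k] [Field K]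
    [Algebra k K] [Algebra.IsIntegral k K] : IsMulTorsion Kˣ := by
  intro u
  let L := IntermediateField.adjoin k {(u : K)}
  have : FiniteDimensional k L :=
    IntermediateField.adjoin.finiteDimensional (Algebra.IsIntegral.isIntegral _)
  have : Finite L := Module.finite_of_finite k
  let x : L := ⟨u, IntermediateField.mem_adjoin_simple_self k _⟩
  have hx : x ≠ 0 := Subtype.coe_ne_coe.mp u.ne_zero
  have hu : IsOfFinOrder (u : K) := ((L.val : L →* K).comp (Units.coeHom L)).isOfFinOrder
    (isOfFinOrder_of_finite (Units.mk0 x hx))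
  exact Units.isOfFinOrder_val.mp hu

theorem MvPolynomial.isMulTorsion_units {σ R : Type*} [CommRing R] [IsReduced R]
    (hR : IsMulTorsion Rˣ) : IsMulTorsion (MvPolynomial σ R)ˣ := by
  intro u
  obtain ⟨r, hr, hu⟩ := isUnit_iff_eq_C_of_isReduced.mp u.isUnit
  rw [← Units.isOfFinOrder_val, hu]
  exact (C : R →+* MvPolynomial σ R).toMonoidHom.isOfFinOrder
    (Units.isOfFinOrder_val.mpr (hR hr.unit))

theorem isLocalHom_of_injective_of_isMulTorsion_units {M N : Type*} [Monoid M] [Monoid N]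
    (f : M →* N) (hf : Function.Injective f) (hN : IsMulTorsion Nˣ) : IsLocalHom f :=
  ⟨fun _ hx => (hf.isOfFinOrder_iff.mp (Units.isOfFinOrder_val.mpr (hN hx.unit))).isUnit⟩

theorem WfDvdMonoid.of_injective_of_isLocalHom {R A F : Type*} [CommMonoidWithZero R]
    [CommMonoidWithZero A] [WfDvdMonoid A] [FunLike F R A] [MonoidWithZeroHomClass F R A]
    (f : F) (hf : Function.Injective f) [IsLocalHom f] : WfDvdMonoid R := by
  refine ⟨Subrelation.wf ?_ (InvImage.wf f wellFounded_dvdNotUnit)⟩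
  rintro a _ ⟨ha, x, hx, rfl⟩
  exact ⟨(map_ne_zero_iff f hf).mpr ha, f x, fun h => hx (isUnit_of_map_unit f x h),
    map_mul f a x⟩

theorem atomicRing_of_wfDvdMonoid {R : Type*} [CommRing R] [WfDvdMonoid R] : AtomicRing R := by
  intro a ha hu
  obtain ⟨l, hl, hprod, -⟩ := (WfDvdMonoid.not_isUnit_iff_exists_factors_eq a ha).mp hu
  exact ⟨l, hl, hprod⟩

/-- If F is an algebraic extension of 𝔽_p, then F[x₁,...,xₙ] is hereditarily atomic. -/
theorem mvPolynomial_hereditarily_atomic (F : Type*) [Field F] (p : ℕ) (hp : p.Prime)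
    [CharP F p] (halg : ∀ x : F, IsIntegral ℤ x) (n : ℕ)
    (S : Subring (MvPolynomial (Fin n) F)) : AtomicRing S := by
  have : Fact p.Prime := ⟨hp⟩
  let := ZMod.algebra F p
  have : Algebra.IsIntegral (ZMod p) F := ⟨fun x => (halg x).tower_top⟩
  have hunits : IsMulTorsion (MvPolynomial (Fin n) F)ˣ :=
    MvPolynomial.isMulTorsion_units (isMulTorsion_units_of_isIntegral (k := ZMod p))
  have : IsLocalHom S.subtype :=
    ⟨(isLocalHom_of_injective_of_isMulTorsion_units (S.subtype : S →* _)
      Subtype.val_injective hunits).map_nonunit⟩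
  have := WfDvdMonoid.of_injective_of_isLocalHom S.subtype Subtype.val_injective
  exact atomicRing_of_wfDvdMonoid
end

section
/- If a field F of characteristic zero is hereditarily atomic, then F is an algebraic extension of ℚ. -/
open Polynomial in
/-- The subring `ℤ + x ℚ[x]` of `F`: images of rational polynomials with integer
constant coefficient. -/
def intConstSubring (F : Type*) [Field F] [CharZero F] (x : F) : Subring F where
  carrier := {y | ∃ p : ℚ[X], (∃ n : ℤ, (n : ℚ) = p.coeff 0) ∧ aeval x p = y}
  zero_mem' := ⟨0, ⟨0, by simp⟩, by simp⟩
  one_mem' := ⟨1, ⟨1, by simp⟩, by simp⟩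
  add_mem' := by
    rintro a b ⟨p, ⟨m, hm⟩, rfl⟩ ⟨q, ⟨n, hn⟩, rfl⟩
    exact ⟨p + q, ⟨m + n, by push_cast; rw [hm, hn]; simp⟩, by simp⟩
  mul_mem' := by
    rintro a b ⟨p, ⟨m, hm⟩, rfl⟩ ⟨q, ⟨n, hn⟩, rfl⟩
    exact ⟨p * q, ⟨m * n, by push_cast; rw [hm, hn, Polynomial.mul_coeff_zero]⟩, by simp⟩
  neg_mem' := by
    rintro a ⟨p, ⟨m, hm⟩, rfl⟩
    exact ⟨-p, ⟨-m, by push_cast; rw [hm]; simp⟩, by simp⟩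

open Polynomial in
lemma mem_intConstSubring {F : Type*} [Field F] [CharZero F] {x : F} {y : F} :
    y ∈ intConstSubring F x ↔
      ∃ p : ℚ[X], (∃ n : ℤ, (n : ℚ) = p.coeff 0) ∧ aeval x p = y := Iff.rfl

/-- A hereditarily atomic field of characteristic zero is algebraic over ℚ. -/
theorem hereditarily_atomic_char_zero_algebraic (F : Type*) [Field F] [CharZero F]
    (h : ∀ S : Subring F, AtomicRing S) : ∀ x : F, IsAlgebraic ℚ x := by
  classical
  intro x
  by_contra hx
  have htr : Transcendental ℚ x := hx
  have hinj : Function.Injective (Polynomial.aeval x : Polynomial ℚ →ₐ[ℚ] F) :=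
    transcendental_iff_injective.mp htr
  set S := intConstSubring F x with hS
  have hxS : x ∈ S := ⟨Polynomial.X, ⟨0, by simp⟩, by simp⟩
  -- the element x in S
  set ξ : S := ⟨x, hxS⟩ with hξ
  have hx0 : x ≠ 0 := by
    intro h0
    exact htr (by rw [h0]; exact isAlgebraic_zero)
  have hξ0 : ξ ≠ 0 := by
    intro h0
    exact hx0 (congrArg Subtype.val h0)
  have hξu : ¬IsUnit ξ := by
    rintro hu
    obtain ⟨z, hz⟩ := isUnit_iff_exists_inv.mp hu
    obtain ⟨q, hq0, hqe⟩ := z.2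
    have : (Polynomial.aeval x : Polynomial ℚ →ₐ[ℚ] F) (Polynomial.X * q) =
        (Polynomial.aeval x : Polynomial ℚ →ₐ[ℚ] F) 1 := by
      have := congrArg Subtype.val hz
      simp only [Subring.coe_mul, hξ, OneMemClass.coe_one] at this
      simpa [hqe] using this
    have hXq : Polynomial.X * q = 1 := hinj this
    have := congrArg (fun p => Polynomial.coeff p 0) hXq
    simp [Polynomial.mul_coeff_zero] at this
  obtain ⟨l, hlirr, hlprod⟩ := h S ξ hξ0 hξu
  -- choose polynomials
  have hP : ∀ s : S, ∃ p : Polynomial ℚ,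
      (∃ n : ℤ, (n : ℚ) = p.coeff 0) ∧ Polynomial.aeval x p = (s : F) := fun s => s.2
  choose P hPint hPeval using hP
  set m : Multiset (Polynomial ℚ) := l.map P with hm
  have hmprod : m.prod = Polynomial.X := by
    apply hinj
    have h1 : (Polynomial.aeval x : Polynomial ℚ →ₐ[ℚ] F) m.prod
        = ((m.map (Polynomial.aeval x : Polynomial ℚ →ₐ[ℚ] F)).prod) := by
      exact map_multiset_prod _ _
    have h2 : m.map (Polynomial.aeval x : Polynomial ℚ →ₐ[ℚ] F) = l.map (⇑S.subtype) := by
      rw [hm, Multiset.map_map]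
      exact Multiset.map_congr rfl (fun s _ => hPeval s)
    have h3 : (l.map (⇑S.subtype)).prod = ((l.prod : S) : F) := by
      exact (map_multiset_prod (S.subtype) l).symm
    rw [h1, h2, h3, hlprod]
    simp [hξ]
  -- constant coefficient
  have hc0 : (m.map (Polynomial.constantCoeff)).prod = 0 := by
    rw [← map_multiset_prod, hmprod]
    simp [Polynomial.constantCoeff_apply]
  have : (0 : ℚ) ∈ m.map Polynomial.constantCoeff := by
    rcases Multiset.prod_eq_zero_iff.mp hc0 with h0
    exact h0
  obtain ⟨p, hpm, hpc⟩ := Multiset.mem_map.mp this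
  obtain ⟨b, hbl, hbP⟩ := Multiset.mem_map.mp hpm
  have hbc : (P b).coeff 0 = 0 := by
    rw [hbP]; exact hpc
  have hbirr : Irreducible b := hlirr b hbl
  -- b = 2 * c with neither factor a unit
  have hcmem : Polynomial.aeval x (Polynomial.C (1/2 : ℚ) * P b) ∈ S :=
    ⟨Polynomial.C (1/2 : ℚ) * P b, ⟨0, by simp [Polynomial.mul_coeff_zero, hbc]⟩, rfl⟩
  set c : S := ⟨_, hcmem⟩ with hc
  have h2S : ((2 : S) : F) = (2 : F) := map_ofNat S.subtype 2
  have hbfac : b = 2 * c := by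
    apply Subtype.ext
    rw [Subring.coe_mul, h2S]
    show (b : F) = 2 * Polynomial.aeval x (Polynomial.C (1/2 : ℚ) * P b)
    rw [← hPeval b, map_mul, Polynomial.aeval_C,
      show ((1:ℚ)/2) = (2:ℚ)⁻¹ by norm_num, map_inv₀, map_ofNat,
      ← mul_assoc, mul_inv_cancel₀ (two_ne_zero), one_mul]
  rcases hbirr.isUnit_or_isUnit hbfac with hu | hu
  · -- 2 is not a unit in S
    obtain ⟨z, hz⟩ := isUnit_iff_exists_inv.mp hu
    obtain ⟨q, ⟨n, hn⟩, hqe⟩ := z.2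
    have : (Polynomial.aeval x : Polynomial ℚ →ₐ[ℚ] F) (2 * q) =
        (Polynomial.aeval x : Polynomial ℚ →ₐ[ℚ] F) 1 := by
      rw [map_mul, map_one, map_ofNat, hqe]
      have := congrArg Subtype.val hz
      rw [Subring.coe_mul, h2S, OneMemClass.coe_one] at this
      exact this
    have h2q : (2 : Polynomial ℚ) * q = 1 := hinj this
    have := congrArg (fun p => Polynomial.coeff p 0) h2q
    simp only [Polynomial.coeff_ofNat_mul, Polynomial.coeff_one_zero] at this
    rw [← hn] at this
    have h2n : (2 * n : ℤ) = 1 := by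
      have h' : ((2 * n : ℤ) : ℚ) = ((1 : ℤ) : ℚ) := by push_cast; linarith [this]
      exact Int.cast_injective h'
    omega
  · -- c is not a unit in S
    obtain ⟨z, hz⟩ := isUnit_iff_exists_inv.mp hu
    obtain ⟨q, hq0, hqe⟩ := z.2
    have : (Polynomial.aeval x : Polynomial ℚ →ₐ[ℚ] F)
        ((Polynomial.C (1/2 : ℚ) * P b) * q) =
        (Polynomial.aeval x : Polynomial ℚ →ₐ[ℚ] F) 1 := by
      have := congrArg Subtype.val hz
      simp only [Subring.coe_mul, OneMemClass.coe_one, hc] at this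
      simpa [hqe] using this
    have hcq : (Polynomial.C (1/2 : ℚ) * P b) * q = 1 := hinj this
    have := congrArg (fun p => Polynomial.coeff p 0) hcq
    simp [Polynomial.mul_coeff_zero, hbc] at this
end

section
/- If a field F of characteristic p > 0 is hereditarily atomic, then the transcendence degree of F over 𝔽_p is at most 1. -/
lemma atomicRing_of_equiv {R S : Type*} [CommRing R] [CommRing S] (e : R ≃+* S)
    (hS : AtomicRing S) : AtomicRing R := by
  intro a ha hu
  obtain ⟨l, hl, hp⟩ := hS (e a)
    (fun h0 => ha (e.injective (h0.trans (map_zero e).symm)))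
    (fun hu' => hu (by simpa using hu'.map e.symm.toRingHom))
  refine ⟨l.map e.symm, ?_, ?_⟩
  · intro b hb
    obtain ⟨c, hc, rfl⟩ := Multiset.mem_map.mp hb
    exact (MulEquiv.irreducible_iff (e.symm : S ≃* R)).mpr (hl c hc)
  · have h2 := map_multiset_prod (e.symm : S ≃+* R) l
    rw [hp, e.symm_apply_apply] at h2
    exact h2.symm

open Polynomial LaurentPolynomial

section NA

variable (k : Type*) [Field k]

noncomputable abbrev myA : Subring (LaurentPolynomial k) := (Polynomial.toLaurent (R := k)).range

noncomputable abbrev myR : Subring (Polynomial (LaurentPolynomial k)) :=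
  Subring.comap (Polynomial.constantCoeff) (myA k)

lemma myR_not_atomic : ¬ AtomicRing (myR k) := by
  haveI : IsDomain (LaurentPolynomial k) := NoZeroDivisors.to_isDomain _
  intro hat
  have hXmem : (Polynomial.X : Polynomial (LaurentPolynomial k)) ∈ myR k := by
    simp only [Subring.mem_comap, constantCoeff_apply, coeff_X_zero]
    exact Subring.zero_mem _
  obtain ⟨l, hl, hprod⟩ := hat ⟨X, hXmem⟩
    (fun h => X_ne_zero (R := LaurentPolynomial k) (congrArg Subtype.val h))
    (fun hu => Polynomial.not_isUnit_X (by simpa using hu.map (myR k).subtype))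
  have hprod' : (l.map (myR k).subtype).prod = X := by
    rw [Multiset.prod_hom l ((myR k).subtype)]
    exact congrArg Subtype.val hprod
  set l' : Multiset (Polynomial (LaurentPolynomial k)) := l.map (myR k).subtype with hl'
  have h0 : (0 : Polynomial (LaurentPolynomial k)) ∉ l' := by
    intro h0
    exact X_ne_zero (R := LaurentPolynomial k) (hprod' ▸ Multiset.prod_eq_zero h0)
  have hdeg : (l'.map natDegree).sum = 1 := by
    rw [← Polynomial.natDegree_multiset_prod l' h0, hprod', natDegree_X]
  have hc0 : ∃ g ∈ l', Polynomial.constantCoeff g = 0 := by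
    have : (l'.map (Polynomial.constantCoeff)).prod = 0 := by
      rw [Multiset.prod_hom l' (Polynomial.constantCoeff (R := LaurentPolynomial k))]
      rw [hprod']
      simp [constantCoeff_apply]
    obtain ⟨c, hc⟩ := Multiset.mem_map.mp (Multiset.prod_eq_zero_iff.mp this)
    exact ⟨c, hc.1, hc.2⟩
  obtain ⟨g, hgmem, hg0⟩ := hc0
  rw [constantCoeff_apply] at hg0
  have hgne : g ≠ 0 := fun h => h0 (h ▸ hgmem)
  have hdeg1 : g.natDegree = 1 := by
    have hle : g.natDegree ≤ 1 := by
      rw [← hdeg]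
      exact Multiset.single_le_sum (fun x _ => Nat.zero_le x) _
        (Multiset.mem_map_of_mem natDegree hgmem)
    rcases Nat.lt_or_ge g.natDegree 1 with h1 | h1
    · exfalso
      have h2 : g = Polynomial.C (g.coeff 0) :=
        Polynomial.eq_C_of_natDegree_eq_zero (Nat.lt_one_iff.mp h1)
      exact hgne (h2.trans (by rw [hg0, map_zero]))
    · omega
  set c := g.coeff 1 with hc
  have hgc : g = Polynomial.C c * X := by
    have hdle : g.degree ≤ 1 := by
      exact Polynomial.degree_le_of_natDegree_le (le_of_eq hdeg1)
    have h2 := Polynomial.eq_X_add_C_of_degree_le_one hdle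
    rw [h2, hg0, map_zero, add_zero]
  set u : Polynomial (LaurentPolynomial k) := Polynomial.C (c * T (-1)) * X with hu_def
  set v : Polynomial (LaurentPolynomial k) := Polynomial.C (T 1) with hv_def
  have hu_mem : u ∈ myR k := by
    simp only [Subring.mem_comap, hu_def, constantCoeff_apply, coeff_C_mul, coeff_X_zero,
      mul_zero]
    exact Subring.zero_mem _
  have hv_mem : v ∈ myR k := by
    simp only [Subring.mem_comap, hv_def, constantCoeff_apply, coeff_C_zero]
    exact ⟨X, Polynomial.toLaurent_X⟩
  have hT : (T (-1) : LaurentPolynomial k) * T 1 = 1 := by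
    rw [← T_add]; norm_num
  have huv : u * v = Polynomial.C c * X := by
    rw [hu_def, hv_def, mul_right_comm, ← Polynomial.C_mul, mul_assoc, hT, mul_one]
  have heq : g = u * v := hgc.trans huv.symm
  obtain ⟨g₀, hg₀mem, hg₀val⟩ := Multiset.mem_map.mp hgmem
  have hirr : Irreducible g₀ := hl g₀ hg₀mem
  have heq₀ : g₀ = (⟨u, hu_mem⟩ : myR k) * ⟨v, hv_mem⟩ := by
    apply Subtype.ext
    show ((myR k).subtype g₀ : Polynomial (LaurentPolynomial k)) = u * v
    exact hg₀val.trans heq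
  rcases hirr.isUnit_or_isUnit heq₀ with hU | hU
  · have h3 : IsUnit u := by simpa using hU.map (myR k).subtype
    have h4 : IsUnit ((0 : LaurentPolynomial k)) := by
      have h2 := h3.map (Polynomial.constantCoeff (R := LaurentPolynomial k))
      simpa [hu_def, constantCoeff_apply, coeff_C_mul] using h2
    exact not_isUnit_zero h4
  · obtain ⟨w, hw⟩ := isUnit_iff_exists_inv.mp hU
    have hw2 : v * (w : Polynomial (LaurentPolynomial k)) = 1 := congrArg Subtype.val hw
    obtain ⟨b, hb⟩ := w.2
    have h5 : Polynomial.toLaurent ((Polynomial.X : Polynomial k) * b) =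
        Polynomial.toLaurent (1 : Polynomial k) := by
      have h3 := congrArg (Polynomial.constantCoeff (R := LaurentPolynomial k)) hw2
      rw [map_mul, map_one] at h3
      rw [map_mul, Polynomial.toLaurent_X, Polynomial.toLaurent_one]
      rw [constantCoeff_apply] at hb
      rw [hb]
      simpa [hv_def, constantCoeff_apply, coeff_C_zero] using h3
    have hXb : (Polynomial.X : Polynomial k) * b = 1 := Polynomial.toLaurent_injective h5
    exact Polynomial.not_isUnit_X (IsUnit.of_mul_eq_one _ hXb)

end NA

section Aux2
variable {k : Type*} [Field k]

lemma exists_clear_denom (q : Polynomial (LaurentPolynomial k)) :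
    ∃ (N : ℕ) (q' : Polynomial (Polynomial k)),
      q'.map (Polynomial.toLaurent) = Polynomial.C (T (N : ℤ)) * q := by
  induction q using Polynomial.induction_on' with
  | add p q hp hq =>
    obtain ⟨N₁, p', hp'⟩ := hp
    obtain ⟨N₂, q', hq'⟩ := hq
    refine ⟨N₁ + N₂, Polynomial.C (Polynomial.X ^ N₂) * p' + Polynomial.C (Polynomial.X ^ N₁) * q', ?_⟩
    rw [Polynomial.map_add, Polynomial.map_mul, Polynomial.map_mul, Polynomial.map_C,
      Polynomial.map_C, hp', hq', Polynomial.toLaurent_X_pow, Polynomial.toLaurent_X_pow]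
    rw [mul_add, ← mul_assoc, ← mul_assoc, ← map_mul, ← map_mul, ← T_add, ← T_add]
    push_cast
    ring_nf
  | monomial n a =>
    obtain ⟨m, a', ha⟩ := a.exists_T_pow
    refine ⟨m, Polynomial.monomial n a', ?_⟩
    rw [Polynomial.map_monomial, ha]
    rw [← Polynomial.C_mul_X_pow_eq_monomial, ← Polynomial.C_mul_X_pow_eq_monomial]
    rw [map_mul]
    ring
end Aux2


/-- A hereditarily atomic field of characteristic p > 0 has transcendence degree at
most 1 over 𝔽_p: no two elements are algebraically independent over 𝔽_p. -/
theorem hereditarily_atomic_char_p_trdeg_le_one (F : Type*) [Field F] (p : ℕ)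
    (hp : p.Prime) [CharP F p] [Algebra (ZMod p) F]
    (h : ∀ S : Subring F, AtomicRing S) :
    ∀ x y : F, ¬ AlgebraicIndependent (ZMod p) ![x, y] := by
  haveI : Fact p.Prime := ⟨hp⟩
  intro x y hxy
  -- swap the pair
  have hyx : AlgebraicIndependent (ZMod p) ![y, x] := by
    have hsw : (![x, y] ∘ ![1, 0] : Fin 2 → F) = ![y, x] := by
      funext i; fin_cases i <;> rfl
    have := hxy.comp ![1, 0] (by decide)
    rwa [hsw] at this
  have hinj : Function.Injective
      ⇑(MvPolynomial.aeval (R := ZMod p) ![y, x] :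
        MvPolynomial (Fin 2) (ZMod p) →ₐ[ZMod p] F) :=
    algebraicIndependent_iff_injective_aeval.mp hyx
  have hx0 : x ≠ 0 := by
    intro h
    apply MvPolynomial.X_ne_zero (R := ZMod p) (1 : Fin 2)
    apply hinj
    simp [h]
  -- the equivalence MvPolynomial (Fin 2) ≃ (ZMod p)[X][X]
  let ι : MvPolynomial (Fin 2) (ZMod p) ≃ₐ[ZMod p] Polynomial (Polynomial (ZMod p)) :=
    (MvPolynomial.finSuccEquiv (ZMod p) 1).trans
      (Polynomial.mapAlgEquiv
        ((MvPolynomial.finSuccEquiv (ZMod p) 0).trans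
          (Polynomial.mapAlgEquiv (MvPolynomial.isEmptyAlgEquiv (ZMod p) (Fin 0)))))
  let ψ₀ : Polynomial (Polynomial (ZMod p)) →+* F :=
    Polynomial.eval₂RingHom (Polynomial.eval₂RingHom (algebraMap (ZMod p) F) x) y
  have hcomp : ψ₀.comp ι.toAlgHom.toRingHom =
      (MvPolynomial.aeval (R := ZMod p) ![y, x]).toRingHom := by
    apply MvPolynomial.ringHom_ext
    · intro r
      simp only [RingHom.coe_comp, Function.comp_apply, AlgHom.toRingHom_eq_coe,
        RingHom.coe_coe, AlgHom.coe_coe, AlgEquiv.coe_algHom]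
      rw [show (MvPolynomial.C r : MvPolynomial (Fin 2) (ZMod p)) =
        algebraMap (ZMod p) _ r from rfl, ι.commutes]
      simp [ψ₀, Polynomial.algebraMap_apply, Algebra.algebraMap_self]
    · intro i
      simp only [RingHom.coe_comp, Function.comp_apply, AlgHom.toRingHom_eq_coe,
        RingHom.coe_coe, AlgHom.coe_coe, AlgEquiv.coe_algHom]
      induction i using Fin.cases with
      | zero =>
        have h1 : ι (MvPolynomial.X 0) = Polynomial.X := by
          simp [ι, MvPolynomial.finSuccEquiv_X_zero]
        rw [h1]
        simp [ψ₀]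
      | succ j =>
        have hj : j = 0 := Subsingleton.elim _ _
        subst hj
        have h1 : ι (MvPolynomial.X (Fin.succ 0)) = Polynomial.C Polynomial.X := by
          show (Polynomial.mapAlgEquiv _)
            ((MvPolynomial.finSuccEquiv (ZMod p) 1) (MvPolynomial.X (Fin.succ 0))) = _
          rw [MvPolynomial.finSuccEquiv_X_succ]
          simp [Polynomial.mapAlgEquiv, MvPolynomial.finSuccEquiv_X_zero,
            Polynomial.map_C, Polynomial.map_X]
        rw [h1]
        simp [ψ₀]
  have hψ₀ : Function.Injective ψ₀ := by
    intro a b hab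
    have h1 := RingHom.congr_fun hcomp (ι.symm a)
    have h2 := RingHom.congr_fun hcomp (ι.symm b)
    simp only [RingHom.coe_comp, Function.comp_apply, AlgHom.toRingHom_eq_coe,
      RingHom.coe_coe, AlgHom.coe_coe, AlgEquiv.coe_algHom,
      AlgEquiv.apply_symm_apply] at h1 h2
    have h3 : ι.symm a = ι.symm b := hinj (by rw [← h1, ← h2, hab])
    exact ι.symm.injective h3
  -- localization
  haveI hloc : IsLocalization (Submonoid.powers (Polynomial.X : Polynomial (ZMod p)))
      (LaurentPolynomial (ZMod p)) := LaurentPolynomial.isLocalization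
  set g0 : Polynomial (ZMod p) →+* F :=
    Polynomial.eval₂RingHom (algebraMap (ZMod p) F) x with hg0_def
  have hunit : ∀ (m : Submonoid.powers (Polynomial.X : Polynomial (ZMod p))),
      IsUnit (g0 m) := by
    rintro ⟨m, n, rfl⟩
    have : g0 (Polynomial.X ^ n) = x ^ n := by
      simp [hg0_def]
    rw [this]
    exact (isUnit_iff_ne_zero.mpr hx0).pow n
  set g : LaurentPolynomial (ZMod p) →+* F := IsLocalization.lift hunit with hg_def
  have hg : ∀ a : Polynomial (ZMod p), g (Polynomial.toLaurent a) = g0 a := fun a => by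
    rw [← LaurentPolynomial.algebraMap_eq_toLaurent]
    exact IsLocalization.lift_eq hunit a
  set Φ : Polynomial (LaurentPolynomial (ZMod p)) →+* F :=
    Polynomial.eval₂RingHom g y with hΦ_def
  have hΦE : ∀ q' : Polynomial (Polynomial (ZMod p)),
      Φ (q'.map Polynomial.toLaurent) = ψ₀ q' := by
    intro q'
    show Polynomial.eval₂ g y (q'.map Polynomial.toLaurent) = _
    rw [Polynomial.eval₂_map]
    congr 1
    exact RingHom.ext hg
  haveI : IsDomain (LaurentPolynomial (ZMod p)) := NoZeroDivisors.to_isDomain _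
  have hΦ : Function.Injective Φ := by
    have key : ∀ q, Φ q = 0 → q = 0 := by
      intro q hq
      obtain ⟨N, q', hq'⟩ := exists_clear_denom q
      have h1 : ψ₀ q' = 0 := by
        rw [← hΦE q', hq', map_mul, hq, mul_zero]
      have h2 : q' = 0 := hψ₀ (by rw [h1, map_zero])
      rw [h2, Polynomial.map_zero] at hq'
      have hTne : (Polynomial.C (T (N : ℤ)) : Polynomial (LaurentPolynomial (ZMod p))) ≠ 0 := by
        simpa using (isUnit_T (R := ZMod p) (N : ℤ)).ne_zero
      exact (mul_eq_zero.mp hq'.symm).resolve_left hTne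
    intro a b hab
    have h4 : Φ (a - b) = 0 := by rw [map_sub, hab, sub_self]
    exact sub_eq_zero.mp (key _ h4)
  exact myR_not_atomic (ZMod p)
    (atomicRing_of_equiv (Subring.equivMapOfInjective (myR (ZMod p)) Φ hΦ)
      (h ((myR (ZMod p)).map Φ)))
end

section
/- The subring ℤ + xℚ[x] of ℚ[x] is not atomic; in particular the element x does not factor into irreducibles in ℤ + xℚ[x]. -/
open Polynomial in
/-- The subring ℤ + xℚ[x] of ℚ[x]: rational polynomials with integer constant term. -/
noncomputable def ZplusXQX : Subring (Polynomial ℚ) where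
  carrier := {f | ∃ n : ℤ, f.coeff 0 = (n : ℚ)}
  mul_mem' := by
    rintro f g ⟨a, ha⟩ ⟨b, hb⟩
    exact ⟨a * b, by rw [Polynomial.mul_coeff_zero, ha, hb]; push_cast; ring⟩
  one_mem' := ⟨1, by simp⟩
  add_mem' := by
    rintro f g ⟨a, ha⟩ ⟨b, hb⟩
    exact ⟨a + b, by simp [ha, hb]⟩
  zero_mem' := ⟨0, by simp⟩
  neg_mem' := by
    rintro f ⟨a, ha⟩
    exact ⟨-a, by simp [ha]⟩

open Polynomial

section ConstantCoeff

variable {R : Type*} [CommRing R]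

theorem Subring.not_isUnit_of_coeff_zero_eq_zero [Nontrivial R] {S : Subring R[X]} {f : S}
    (hf : (f : R[X]).coeff 0 = 0) : ¬IsUnit f := by
  intro hu
  have := (hu.map S.subtype).map constantCoeff
  simp_all

theorem Subring.coeff_zero_multiset_prod_ne_zero [IsDomain R] {S : Subring R[X]}
    {l : Multiset S} (hl : ∀ b ∈ l, (b : R[X]).coeff 0 ≠ 0) :
    (l.prod : R[X]).coeff 0 ≠ 0 := by
  have := map_multiset_prod (constantCoeff.comp S.subtype) l
  simp only [RingHom.comp_apply, Subring.coe_subtype, constantCoeff_apply] at this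
  rw [this]
  exact Multiset.prod_ne_zero (by simpa using hl)

end ConstantCoeff

namespace ZplusXQX

theorem coe_two : ((2 : ZplusXQX) : ℚ[X]) = 2 := map_ofNat ZplusXQX.subtype 2

theorem not_isUnit_two : ¬IsUnit (2 : ZplusXQX) := by
  rintro ⟨u, hu⟩
  obtain ⟨n, hn⟩ := (↑u⁻¹ : ZplusXQX).2
  have h := congrArg (fun p : ZplusXQX => (p : ℚ[X]).coeff 0) u.mul_inv
  simp only [hu, Subring.coe_mul, coe_two, mul_coeff_zero, hn, Subring.coe_one,
    coeff_one_zero] at h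
  have : 2 * n = 1 := Int.cast_injective (α := ℚ) (by push_cast; rw [← h]; norm_num)
  omega

theorem not_irreducible_of_coeff_zero_eq_zero {f : ZplusXQX} (hf : (f : ℚ[X]).coeff 0 = 0) :
    ¬Irreducible f := by
  let g : ZplusXQX := ⟨C (1 / 2 : ℚ) * f, 0, by simp [hf]⟩
  have hg : (g : ℚ[X]).coeff 0 = 0 := by simp [g, hf]
  have hfg : f = 2 * g := Subtype.ext <| by
    rw [Subring.coe_mul, coe_two, ← mul_assoc, ← C_ofNat, ← C_mul]
    norm_num
  intro hirr
  rcases hirr.isUnit_or_isUnit hfg with h | h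
  · exact not_isUnit_two h
  · exact Subring.not_isUnit_of_coeff_zero_eq_zero hg h

theorem not_exists_multiset_prod_irreducible_of_coeff_zero_eq_zero {f : ZplusXQX}
    (hf : (f : ℚ[X]).coeff 0 = 0) :
    ¬∃ l : Multiset ZplusXQX, (∀ b ∈ l, Irreducible b) ∧ l.prod = f := by
  rintro ⟨l, hirr, rfl⟩
  exact Subring.coeff_zero_multiset_prod_ne_zero
    (fun b hb h0 => not_irreducible_of_coeff_zero_eq_zero h0 (hirr b hb)) hf

end ZplusXQX

/-- ℤ + xℚ[x] is not atomic; in particular x has no factorization into irreducibles. -/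
theorem ZplusXQX_not_atomic :
    ¬ AtomicRing ZplusXQX ∧
    ¬ ∃ l : Multiset ZplusXQX, (∀ b ∈ l, Irreducible b) ∧
        l.prod = ⟨Polynomial.X, ⟨0, by simp⟩⟩ := by
  have hX : ((⟨X, 0, by simp⟩ : ZplusXQX) : ℚ[X]).coeff 0 = 0 := coeff_X_zero
  have hX_ne : (⟨X, 0, by simp⟩ : ZplusXQX) ≠ 0 := fun h => X_ne_zero (congrArg Subtype.val h)
  have no_factorization := ZplusXQX.not_exists_multiset_prod_irreducible_of_coeff_zero_eq_zero hX
  exact ⟨fun hA => no_factorization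
    (hA _ hX_ne (Subring.not_isUnit_of_coeff_zero_eq_zero hX)), no_factorization⟩
end

section
/- For a prime p, let M = ℤ[1/p] ∩ ℚ_{≥0} be the additive monoid of nonnegative p-adic fractions. Then the monoid algebra 𝔽_p[M] is antimatter (has no irreducible elements) and is not atomic. -/
/-- The additive monoid M = ℤ[1/p] ∩ ℚ_{≥0} of nonnegative p-adic fractions. -/
def padicFracMonoid (p : ℕ) : AddSubmonoid ℚ where
  carrier := {q | 0 ≤ q ∧ ∃ (a : ℤ) (n : ℕ), q * (p : ℚ) ^ n = (a : ℚ)}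
  zero_mem' := ⟨le_refl 0, 0, 0, by simp⟩
  add_mem' := by
    rintro q r ⟨hq, a, m, hqa⟩ ⟨hr, b, n, hrb⟩
    refine ⟨add_nonneg hq hr, a * (p : ℤ) ^ n + b * (p : ℤ) ^ m, m + n, ?_⟩
    push_cast
    linear_combination ((p : ℚ) ^ n) * hqa + ((p : ℚ) ^ m) * hrb

/-!
Since `M = p • M` and `ZMod p` is perfect, Frobenius is surjective on `𝔽_p[M]`: every element is a
`p`-th power, hence not irreducible. With no irreducibles, atomicity would make every nonzero element
a unit, but `x ^ 1` lies in the kernel of the constant-coefficient map `𝔽_p[M] → 𝔽_p`.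
-/
open AddMonoidAlgebra

theorem AtomicRing.isUnit_of_forall_not_irreducible {R : Type*} [CommRing R] (hR : AtomicRing R)
    (h : ∀ a : R, ¬Irreducible a) {a : R} (ha : a ≠ 0) : IsUnit a := by
  by_contra hu
  obtain ⟨l, hl, rfl⟩ := hR a ha hu
  rw [Multiset.eq_zero_of_forall_notMem fun b hb ↦ h b (hl b hb), Multiset.prod_zero] at hu
  exact hu isUnit_one

namespace AddMonoidAlgebra

variable {k M : Type*} [CommSemiring k] [AddCommMonoid M]

instance charP (p : ℕ) [CharP k p] : CharP (AddMonoidAlgebra k M) p :=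
  charP_of_injective_ringHom (f := singleZeroRingHom) (single_right_injective (m := 0)) p

theorem frobenius_surjective (p : ℕ) [Fact p.Prime] [CharP k p] [PerfectRing k p]
    (hM : ∀ m : M, ∃ n, p • n = m) : Function.Surjective (frobenius (AddMonoidAlgebra k M) p) := by
  intro f
  induction f using AddMonoidAlgebra.induction with
  | zero => exact ⟨0, map_zero _⟩
  | single_add m r f _ _ ih =>
    obtain ⟨g, rfl⟩ := ih
    obtain ⟨n, rfl⟩ := hM m
    refine ⟨single n ((frobeniusEquiv k p).symm r) + g, ?_⟩
    rw [map_add, frobenius_def, single_pow, ← frobenius_def, frobenius_apply_frobeniusEquiv_symm]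

variable [Subsingleton (AddUnits M)]

variable (k M) in
noncomputable def zeroIndicator : Multiplicative M →* k where
  toFun x := by classical exact if x.toAdd = 0 then 1 else 0
  map_one' := by simp
  map_mul' x y := by
    classical
    by_cases hx : x.toAdd = 0 <;> by_cases hy : y.toAdd = 0 <;> simp [hx, hy, add_eq_zero]

variable (k M) in
/-- The coefficient at `0`, a ring map because `0` is not a sum of nonzero elements of `M`. -/
noncomputable def constantCoeff : AddMonoidAlgebra k M →ₐ[k] k := lift k k M (zeroIndicator k M)

theorem constantCoeff_single {m : M} (hm : m ≠ 0) (r : k) : constantCoeff k M (single m r) = 0 := by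
  simp [constantCoeff, zeroIndicator, hm]

theorem not_isUnit_single [Nontrivial k] {m : M} (hm : m ≠ 0) (r : k) :
    ¬IsUnit (single m r) := fun h ↦ by
  simpa [constantCoeff_single hm] using h.map (constantCoeff k M)

end AddMonoidAlgebra

namespace padicFracMonoid

theorem exists_nsmul_eq {p : ℕ} (hp : p ≠ 0) (m : padicFracMonoid p) : ∃ n, p • n = m := by
  obtain ⟨q, hq0, a, e, he⟩ := m
  have hp' : (p : ℚ) ≠ 0 := Nat.cast_ne_zero.mpr hp
  refine ⟨⟨q / p, div_nonneg hq0 p.cast_nonneg, a, e + 1, ?_⟩, Subtype.ext ?_⟩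
  · rw [pow_succ, ← he]; field_simp
  · simp only [AddSubmonoidClass.coe_nsmul, nsmul_eq_mul]; field_simp

instance (p : ℕ) : Subsingleton (AddUnits (padicFracMonoid p)) :=
  subsingleton_of_forall_eq 0 fun w ↦ AddUnits.ext <| Subtype.ext <| by
    have h := congrArg Subtype.val w.val_neg
    have := w.val.2.1
    have := w.neg.2.1
    push_cast at h ⊢
    linarith

theorem one_mem (p : ℕ) : (1 : ℚ) ∈ padicFracMonoid p := ⟨zero_le_one, 1, 0, by simp⟩

end padicFracMonoid

theorem padic_monoid_algebra_antimatter_not_atomic_general (p : ℕ) [Fact p.Prime] :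
    (∀ a : AddMonoidAlgebra (ZMod p) (padicFracMonoid p), ¬ Irreducible a) ∧
    ¬ AtomicRing (AddMonoidAlgebra (ZMod p) (padicFracMonoid p)) := by
  have hp : p.Prime := Fact.out
  have antimatter : ∀ a : AddMonoidAlgebra (ZMod p) (padicFracMonoid p), ¬ Irreducible a := by
    intro a
    obtain ⟨g, rfl⟩ := frobenius_surjective p (padicFracMonoid.exists_nsmul_eq hp.ne_zero) a
    exact not_irreducible_pow hp.ne_one
  refine ⟨antimatter, fun hatomic ↦ ?_⟩
  have hone : (⟨1, padicFracMonoid.one_mem p⟩ : padicFracMonoid p) ≠ 0 :=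
    fun h ↦ one_ne_zero (congrArg Subtype.val h)
  exact not_isUnit_single hone (1 : ZMod p) <|
    hatomic.isUnit_of_forall_not_irreducible antimatter (by simp)

/-- The monoid algebra 𝔽_p[M], for M = ℤ[1/p] ∩ ℚ_{≥0}, is antimatter (it has no
irreducible elements) and is not atomic. -/
theorem padic_monoid_algebra_antimatter_not_atomic (p : ℕ) (hp : p.Prime) [Fact p.Prime] :
    (∀ a : AddMonoidAlgebra (ZMod p) (padicFracMonoid p), ¬ Irreducible a) ∧
    ¬ AtomicRing (AddMonoidAlgebra (ZMod p) (padicFracMonoid p)) :=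
  padic_monoid_algebra_antimatter_not_atomic_general p
end

section
/- The subring T = ℤ[xⁿ, 2/xⁿ : n ∈ ℕ] of ℤ[x, x⁻¹] is not atomic: its only units are ±1 and the element 2 does not factor into irreducibles in T. -/
open LaurentPolynomial in
/-- The subring T = ℤ[xⁿ, 2/xⁿ : n ∈ ℕ] of ℤ[x,x⁻¹]. -/
noncomputable def Tsub : Subring (LaurentPolynomial ℤ) :=
  Subring.closure ((Set.range fun n : ℕ => (T (n : ℤ) : LaurentPolynomial ℤ)) ∪
    (Set.range fun n : ℕ => 2 * T (-(n : ℤ))))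

namespace TsubAux

open LaurentPolynomial

lemma C_two : (LaurentPolynomial.C (2:ℤ) : LaurentPolynomial ℤ) = 2 := by
  rw [show (2:ℤ) = 1 + 1 from rfl, map_add, map_one]; norm_num

/-- A polynomial factor of a monomial is a monomial. -/
lemma poly_factor {p q : Polynomial ℤ} {r : ℤ} {N : ℕ} (hr : r ≠ 0)
    (h : p * q = Polynomial.C r * Polynomial.X ^ N) :
    ∃ (a : ℤ) (i : ℕ), p = Polynomial.C a * Polynomial.X ^ i := by
  have hne : p * q ≠ 0 := by
    rw [h]
    exact mul_ne_zero (Polynomial.C_ne_zero.2 hr) (pow_ne_zero _ Polynomial.X_ne_zero)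
  have hp : p ≠ 0 := left_ne_zero_of_mul hne
  have hq : q ≠ 0 := right_ne_zero_of_mul hne
  have hdeg : p.natDegree + q.natDegree = N := by
    rw [← Polynomial.natDegree_mul hp hq, h, Polynomial.natDegree_C_mul_X_pow _ _ hr]
  have htr : p.natTrailingDegree + q.natTrailingDegree = N := by
    rw [← Polynomial.natTrailingDegree_mul hp hq, h, Polynomial.C_mul_X_pow_eq_monomial,
      Polynomial.natTrailingDegree_monomial hr]
  have h1 := Polynomial.natTrailingDegree_le_natDegree p
  have h2 := Polynomial.natTrailingDegree_le_natDegree q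
  have hd : p.natTrailingDegree = p.natDegree := by omega
  refine ⟨p.coeff p.natDegree, p.natDegree, ?_⟩
  ext i
  rw [Polynomial.coeff_C_mul, Polynomial.coeff_X_pow]
  rcases lt_trichotomy i p.natDegree with hlt | heq | hgt
  · rw [if_neg hlt.ne, mul_zero, Polynomial.coeff_eq_zero_of_lt_natTrailingDegree (hd ▸ hlt)]
  · rw [heq, if_pos rfl, mul_one]
  · rw [if_neg hgt.ne', mul_zero, Polynomial.coeff_eq_zero_of_natDegree_lt hgt]

/-- A Laurent-polynomial factor of a monomial is a monomial. -/
lemma laurent_factor {b c : LaurentPolynomial ℤ} {r m : ℤ} (hr : r ≠ 0)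
    (h : b * c = LaurentPolynomial.C r * T m) :
    ∃ (a k : ℤ), b = LaurentPolynomial.C a * T k := by
  obtain ⟨n, p, hp⟩ := b.exists_T_pow
  obtain ⟨n', q, hq⟩ := c.exists_T_pow
  set s : ℤ := m + n + n' with hs
  set t : ℕ := s.natAbs with ht
  have hst : (0:ℤ) ≤ s + t := by omega
  have key : Polynomial.toLaurent (p * (q * Polynomial.X ^ t)) =
      Polynomial.toLaurent (Polynomial.C r * Polynomial.X ^ (s + t).toNat) := by
    rw [map_mul, map_mul, map_mul, hp, hq, Polynomial.toLaurent_X_pow, Polynomial.toLaurent_C,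
      Polynomial.toLaurent_X_pow]
    calc b * T n * (c * T n' * T t) = b * c * T n * T n' * T t := by ring
    _ = LaurentPolynomial.C r * T m * T n * T n' * T t := by rw [h]
    _ = LaurentPolynomial.C r * T (m + n + n' + t) := by
        rw [mul_T_assoc, mul_T_assoc, mul_T_assoc]; ring_nf
    _ = LaurentPolynomial.C r * T ((s + t).toNat : ℤ) := by
        rw [Int.toNat_of_nonneg hst]
  have hpoly : p * (q * Polynomial.X ^ t) = Polynomial.C r * Polynomial.X ^ (s + t).toNat :=
    Polynomial.toLaurent_injective key
  obtain ⟨a, i, hai⟩ := poly_factor hr hpoly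
  refine ⟨a, i - n, ?_⟩
  have hb : b = Polynomial.toLaurent p * T (-n) := by
    rw [hp, mul_T_assoc]; simp
  rw [hb, hai, map_mul, Polynomial.toLaurent_C, Polynomial.toLaurent_X_pow, mul_T_assoc,
    ← sub_eq_add_neg]

lemma CT_eq_CT {a k a' k' : ℤ}
    (h : (LaurentPolynomial.C a * T k : LaurentPolynomial ℤ) = LaurentPolynomial.C a' * T k') :
    (k = k' ∧ a = a') ∨ (a = 0 ∧ a' = 0) := by
  rw [← single_eq_C_mul_T, ← single_eq_C_mul_T] at h
  exact AddMonoidAlgebra.single_inj.mp h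

lemma coeff_CT (a k : ℤ) :
    (AddMonoidAlgebra.coeff (LaurentPolynomial.C a * T k : LaurentPolynomial ℤ)) k = a := by
  rw [← single_eq_C_mul_T]; exact Finsupp.single_eq_same

lemma one_eq : (1 : LaurentPolynomial ℤ) = LaurentPolynomial.C 1 * T 0 := by
  rw [map_one, T_zero, mul_one]

lemma neg_one_eq : (-1 : LaurentPolynomial ℤ) = LaurentPolynomial.C (-1) * T 0 := by
  rw [map_neg, map_one, T_zero, mul_one]

lemma two_eq : (2 : LaurentPolynomial ℤ) = LaurentPolynomial.C 2 * T 0 := by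
  rw [C_two, T_zero, mul_one]

/-- The parity subring: coefficients at negative exponents are even. -/
noncomputable def Sset : Subring (LaurentPolynomial ℤ) where
  carrier := {f : LaurentPolynomial ℤ | ∀ n : ℤ, n < 0 → (2:ℤ) ∣ (AddMonoidAlgebra.coeff f) n}
  zero_mem' := fun n _ => by simp
  one_mem' := fun n hn => by
    have h1 : (AddMonoidAlgebra.coeff (1 : LaurentPolynomial ℤ)) n = (Finsupp.single (0:ℤ) (1:ℤ)) n := rfl
    rw [h1, Finsupp.single_apply, if_neg (by omega)]
    exact dvd_zero _
  add_mem' := fun {f g} hf hg n hn => by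
    have : (AddMonoidAlgebra.coeff (f + g : LaurentPolynomial ℤ)) n = (AddMonoidAlgebra.coeff f) n + (AddMonoidAlgebra.coeff g) n := rfl
    rw [this]; exact dvd_add (hf n hn) (hg n hn)
  neg_mem' := fun {f} hf n hn => by
    have : (AddMonoidAlgebra.coeff (-f : LaurentPolynomial ℤ)) n = -((AddMonoidAlgebra.coeff f) n) := rfl
    rw [this]; exact (hf n hn).neg_right
  mul_mem' := fun {f g} hf hg n hn => by
    rw [AddMonoidAlgebra.mul_apply]
    refine Finset.dvd_sum fun i _ => Finset.dvd_sum fun j _ => ?_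
    dsimp only
    split_ifs with hij
    · rcases lt_or_ge i 0 with hi | hi
      · exact (hf i hi).mul_right _
      · exact (hg j (by omega)).mul_left _
    · exact dvd_zero _

lemma mem_Sset {f : LaurentPolynomial ℤ} :
    f ∈ Sset ↔ ∀ n : ℤ, n < 0 → (2:ℤ) ∣ (AddMonoidAlgebra.coeff f) n := Iff.rfl

lemma Tsub_le_Sset : Tsub ≤ Sset := by
  rw [Tsub, Subring.closure_le]
  rintro f (⟨n, rfl⟩ | ⟨n, rfl⟩) m hm <;> dsimp only
  · have : (AddMonoidAlgebra.coeff (T (n:ℤ) : LaurentPolynomial ℤ)) m = (Finsupp.single (n:ℤ) (1:ℤ)) m := rfl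
    rw [this, Finsupp.single_apply, if_neg (by omega)]
    exact dvd_zero _
  · have h2 : (2 * T (-(n:ℤ)) : LaurentPolynomial ℤ) = LaurentPolynomial.C 2 * T (-(n:ℤ)) := by
      rw [C_two]
    rw [h2, ← single_eq_C_mul_T]
    have : AddMonoidAlgebra.coeff (AddMonoidAlgebra.single (-(n:ℤ)) (2:ℤ) : LaurentPolynomial ℤ) m
        = (Finsupp.single (-(n:ℤ)) (2:ℤ)) m := rfl
    rw [this, Finsupp.single_apply]
    split_ifs <;> simp

lemma T_mem (n : ℤ) (hn : 0 ≤ n) : (T n : LaurentPolynomial ℤ) ∈ Tsub := by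
  refine Subring.subset_closure (Or.inl ⟨n.toNat, ?_⟩)
  show T ((n.toNat : ℕ) : ℤ) = T n
  rw [Int.toNat_of_nonneg hn]

lemma C_mem (a : ℤ) : (LaurentPolynomial.C a : LaurentPolynomial ℤ) ∈ Tsub := by
  have : (LaurentPolynomial.C a : LaurentPolynomial ℤ) = ((a : ℤ) : LaurentPolynomial ℤ) := by
    simpa using map_intCast LaurentPolynomial.C a
  rw [this]
  exact intCast_mem Tsub a

lemma single_mem {a k : ℤ} (h : 0 ≤ k ∨ (2:ℤ) ∣ a) :
    (LaurentPolynomial.C a * T k : LaurentPolynomial ℤ) ∈ Tsub := by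
  rcases le_or_gt 0 k with hk | hk
  · exact mul_mem (C_mem a) (T_mem k hk)
  · obtain ⟨b, rfl⟩ := h.resolve_left (by omega)
    have hgen : (2 * T (-((-k).toNat : ℤ)) : LaurentPolynomial ℤ) ∈ Tsub :=
      Subring.subset_closure (Or.inr ⟨(-k).toNat, rfl⟩)
    have hk' : (-((-k).toNat : ℤ)) = k := by omega
    rw [hk'] at hgen
    have : (LaurentPolynomial.C (2 * b) * T k : LaurentPolynomial ℤ)
        = LaurentPolynomial.C b * (2 * T k) := by
      rw [map_mul, C_two]; ring
    rw [this]
    exact mul_mem (C_mem b) hgen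

lemma not_pm_one_of_even {a k : ℤ} (ha : (2:ℤ) ∣ a)
    (h : (LaurentPolynomial.C a * T k : LaurentPolynomial ℤ) = 1 ∨
      (LaurentPolynomial.C a * T k : LaurentPolynomial ℤ) = -1) : False := by
  rcases h with h | h
  · rw [one_eq] at h
    rcases CT_eq_CT h with ⟨_, h⟩ | ⟨_, h⟩ <;> omega
  · rw [neg_one_eq] at h
    rcases CT_eq_CT h with ⟨_, h⟩ | ⟨_, h⟩ <;> omega

lemma coe_two : ((2 : Tsub) : LaurentPolynomial ℤ) = 2 := rfl

lemma T_one_not_pm_one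
    (h : (T 1 : LaurentPolynomial ℤ) = 1 ∨ (T 1 : LaurentPolynomial ℤ) = -1) : False := by
  have hT : (T 1 : LaurentPolynomial ℤ) = LaurentPolynomial.C 1 * T 1 := by
    rw [map_one, one_mul]
  rcases h with h | h
  · rw [hT, one_eq] at h
    rcases CT_eq_CT h with ⟨h, _⟩ | ⟨h, _⟩ <;> omega
  · rw [hT, neg_one_eq] at h
    rcases CT_eq_CT h with ⟨h, _⟩ | ⟨h, _⟩ <;> omega

end TsubAux

open LaurentPolynomial TsubAux in
/-- T = ℤ[xⁿ, 2/xⁿ : n ∈ ℕ] is not atomic: its only units are ±1, and the element 2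
does not factor into irreducibles in T. -/
theorem Tsub_not_atomic :
    (∀ u : Tsub, IsUnit u →
      (u : LaurentPolynomial ℤ) = 1 ∨ (u : LaurentPolynomial ℤ) = -1) ∧
    ¬ ∃ l : Multiset Tsub, (∀ b ∈ l, Irreducible b) ∧ l.prod = (2 : Tsub) := by
  have hU : ∀ u : Tsub, IsUnit u →
      (u : LaurentPolynomial ℤ) = 1 ∨ (u : LaurentPolynomial ℤ) = -1 := by
    intro u hu
    obtain ⟨v, huv⟩ := hu.exists_right_inv
    have h1 : (u : LaurentPolynomial ℤ) * (v : LaurentPolynomial ℤ)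
        = LaurentPolynomial.C 1 * T 0 := by
      have := congrArg (fun x : Tsub => (x : LaurentPolynomial ℤ)) huv
      push_cast at this
      rw [this, ← one_eq]
    obtain ⟨a, k, hak⟩ := laurent_factor one_ne_zero h1
    have h1' : (v : LaurentPolynomial ℤ) * (u : LaurentPolynomial ℤ)
        = LaurentPolynomial.C 1 * T 0 := by rw [mul_comm (v : LaurentPolynomial ℤ)]; exact h1
    obtain ⟨a', k', hak'⟩ := laurent_factor one_ne_zero h1'
    have hcomb : LaurentPolynomial.C (a * a') * T (k + k') = LaurentPolynomial.C 1 * T 0 := by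
      rw [map_mul, T_add, ← h1, hak, hak']; ring
    rcases CT_eq_CT hcomb with ⟨hk0, ha1⟩ | ⟨_, h10⟩
    swap
    · exact absurd h10 one_ne_zero
    have haunit : a = 1 ∨ a = -1 := Int.isUnit_iff.mp (IsUnit.of_mul_eq_one a' ha1)
    have ha'unit : a' = 1 ∨ a' = -1 :=
      Int.isUnit_iff.mp (IsUnit.of_mul_eq_one a (by rw [mul_comm]; exact ha1))
    have hk : k = 0 := by
      by_contra hk
      rcases lt_or_gt_of_ne hk with hneg | hpos
      · have hdvd := (mem_Sset.mp (Tsub_le_Sset u.2)) k hneg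
        rw [hak, coeff_CT] at hdvd
        omega
      · have hneg' : k' < 0 := by omega
        have hdvd := (mem_Sset.mp (Tsub_le_Sset v.2)) k' hneg'
        rw [hak', coeff_CT] at hdvd
        omega
    rw [hk, T_zero, mul_one] at hak
    rcases haunit with rfl | rfl
    · left; rw [hak, map_one]
    · right; rw [hak, map_neg, map_one]
  refine ⟨hU, ?_⟩
  rintro ⟨l, hirr, hprod⟩
  -- every factor is a monomial with odd coefficient
  have hodd : ∀ b ∈ l, ∃ a k : ℤ, ¬ (2:ℤ) ∣ a ∧
      (b : LaurentPolynomial ℤ) = LaurentPolynomial.C a * T k := by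
    intro b hb
    have hdvd : b ∣ (2 : Tsub) := hprod ▸ Multiset.dvd_prod hb
    obtain ⟨c, hc⟩ := hdvd
    have h2 : (b : LaurentPolynomial ℤ) * (c : LaurentPolynomial ℤ)
        = LaurentPolynomial.C 2 * T 0 := by
      have := congrArg (fun x : Tsub => (x : LaurentPolynomial ℤ)) hc
      push_cast at this
      rw [← this, coe_two, ← two_eq]
    obtain ⟨a, k, hbak⟩ := laurent_factor two_ne_zero h2
    by_cases h2a : (2:ℤ) ∣ a
    · exfalso
      have hmem1 : (T 1 : LaurentPolynomial ℤ) ∈ Tsub := T_mem 1 (by norm_num)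
      have hmem2 : (LaurentPolynomial.C a * T (k - 1) : LaurentPolynomial ℤ) ∈ Tsub :=
        single_mem (Or.inr h2a)
      have hfact : b = (⟨T 1, hmem1⟩ : Tsub) * ⟨LaurentPolynomial.C a * T (k - 1), hmem2⟩ := by
        apply Subtype.ext
        push_cast
        have hre : (T 1 : LaurentPolynomial ℤ) * (LaurentPolynomial.C a * T (k - 1))
            = LaurentPolynomial.C a * T (k - 1) * T 1 := by ring
        rw [hbak, hre, mul_T_assoc, sub_add_cancel]
      rcases (hirr b hb).isUnit_or_isUnit hfact with h | h
      · exact T_one_not_pm_one (hU _ h)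
      · exact not_pm_one_of_even h2a (hU _ h)
    · exact ⟨a, k, h2a, hbak⟩
  -- the product of odd monomials is an odd monomial
  have hP : ∀ l' : Multiset Tsub,
      (∀ b ∈ l', ∃ a k : ℤ, ¬ (2:ℤ) ∣ a ∧
        (b : LaurentPolynomial ℤ) = LaurentPolynomial.C a * T k) →
      ∃ a k : ℤ, ¬ (2:ℤ) ∣ a ∧
        ((l'.prod : Tsub) : LaurentPolynomial ℤ) = LaurentPolynomial.C a * T k := by
    intro l'
    induction l' using Multiset.induction_on with
    | empty =>
      intro _
      refine ⟨1, 0, by norm_num, ?_⟩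
      rw [Multiset.prod_zero, OneMemClass.coe_one]
      exact one_eq
    | cons b m ih =>
      intro hall
      obtain ⟨a, k, ha, hb⟩ := hall b (Multiset.mem_cons_self _ _)
      obtain ⟨a', k', ha', hm⟩ := ih fun x hx => hall x (Multiset.mem_cons_of_mem hx)
      refine ⟨a * a', k + k', ?_, ?_⟩
      · intro hdvd
        rcases Int.prime_two.2.2 a a' hdvd with h | h
        · exact ha h
        · exact ha' h
      · rw [Multiset.prod_cons]
        have hco : ((b * m.prod : Tsub) : LaurentPolynomial ℤ)
            = (b : LaurentPolynomial ℤ) * ((m.prod : Tsub) : LaurentPolynomial ℤ) := rfl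
        rw [hco, hb, hm, map_mul, T_add]
        ring
  obtain ⟨a, k, ha, hpl⟩ := hP l hodd
  rw [hprod] at hpl
  have h2' : (LaurentPolynomial.C 2 * T 0 : LaurentPolynomial ℤ)
      = LaurentPolynomial.C a * T k := by
    rw [← two_eq, ← hpl, coe_two]
  rcases CT_eq_CT h2' with ⟨_, h⟩ | ⟨h, _⟩ <;> omega
end

section
/- For any integral domain R, the power series ring R⟦x⟧ is not hereditarily atomic; that is, R⟦x⟧ contains a subring that is not atomic. -/
open Polynomial LaurentPolynomial

section Model
variable (k : Type*) [CommRing k] [IsDomain k]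

/-- The subring `k[T] + X·k[T,T⁻¹][X]` of `k[T,T⁻¹][X]`. -/
def modelSubring : Subring (Polynomial (LaurentPolynomial k)) where
  carrier := {f | ∀ m : ℤ, m < 0 → (f.coeff 0).coeff m = 0}
  zero_mem' := by intro m hm; simp
  one_mem' := by
    intro m hm
    have h1 : (1 : LaurentPolynomial k) = T 0 := T_zero.symm
    rw [Polynomial.coeff_one_zero, h1, T_apply]
    simp; omega
  add_mem' := by
    intro a b ha hb m hm
    rw [Polynomial.coeff_add, AddMonoidAlgebra.coeff_add, Finsupp.add_apply, ha m hm, hb m hm, add_zero]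
  neg_mem' := by
    intro a ha m hm
    rw [Polynomial.coeff_neg, AddMonoidAlgebra.coeff_neg, Finsupp.neg_apply, ha m hm, neg_zero]
  mul_mem' := by
    classical
    intro a b ha hb m hm
    rw [Polynomial.mul_coeff_zero]
    by_contra h
    have h1 : m ∈ ((a.coeff 0) * (b.coeff 0)).coeff.support := Finsupp.mem_support_iff.mpr h
    have h2 := AddMonoidAlgebra.support_coeff_mul_subset (a.coeff 0) (b.coeff 0) h1
    rw [Finset.mem_add] at h2
    obtain ⟨i, hi, j, hj, rfl⟩ := h2
    rcases lt_or_ge i 0 with h' | h'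
    · exact (Finsupp.mem_support_iff.mp hi) (ha i h')
    · rcases lt_or_ge j 0 with h'' | h''
      · exact (Finsupp.mem_support_iff.mp hj) (hb j h'')
      · omega

variable {k}

lemma mem_modelSubring {f : Polynomial (LaurentPolynomial k)} :
    f ∈ modelSubring k ↔ ∀ m : ℤ, m < 0 → (f.coeff 0).coeff m = 0 := Iff.rfl

lemma X_mem_modelSubring : (X : Polynomial (LaurentPolynomial k)) ∈ modelSubring k := by
  intro m hm; rw [Polynomial.coeff_X_zero]; simp

lemma CT_mem_modelSubring : (Polynomial.C (T 1) : Polynomial (LaurentPolynomial k)) ∈ modelSubring k := by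
  intro m hm; rw [Polynomial.coeff_C_zero, T_apply]; simp; omega

lemma CmulX_mem_modelSubring (c : LaurentPolynomial k) :
    (Polynomial.C c * X : Polynomial (LaurentPolynomial k)) ∈ modelSubring k := by
  intro m hm
  rw [Polynomial.mul_coeff_zero, Polynomial.coeff_X_zero, mul_zero]
  simp

/-- Elements of the model subring with zero constant coefficient are not units. -/
lemma not_isUnit_of_coeff_zero (s : modelSubring k) (h : (s : Polynomial (LaurentPolynomial k)).coeff 0 = 0) :
    ¬ IsUnit s := by
  intro hu
  obtain ⟨v, hv⟩ := isUnit_iff_exists_inv.mp hu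
  have hM : (s : Polynomial (LaurentPolynomial k)) * (v : Polynomial (LaurentPolynomial k)) = 1 := by
    have := congrArg (fun y : modelSubring k => (y : Polynomial (LaurentPolynomial k))) hv
    push_cast at this
    exact this
  have := congrArg (fun p => p.coeff 0) hM
  simp only [Polynomial.mul_coeff_zero, h, zero_mul, Polynomial.coeff_one_zero] at this
  exact zero_ne_one this

lemma not_isUnit_CT (h : (Polynomial.C (T 1) : Polynomial (LaurentPolynomial k)) ∈ modelSubring k) :
    ¬ IsUnit (⟨Polynomial.C (T 1), h⟩ : modelSubring k) := by
  intro hu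
  obtain ⟨v, hv⟩ := isUnit_iff_exists_inv.mp hu
  have hM : (Polynomial.C (T 1) : Polynomial (LaurentPolynomial k)) * (v : Polynomial (LaurentPolynomial k)) = 1 := by
    have := congrArg (fun y : modelSubring k => (y : Polynomial (LaurentPolynomial k))) hv
    push_cast at this
    exact this
  have h0 := congrArg (fun p => p.coeff 0) hM
  simp only [Polynomial.mul_coeff_zero, Polynomial.coeff_C_zero, Polynomial.coeff_one_zero] at h0
  have hv0 : ((v : Polynomial (LaurentPolynomial k)).coeff 0) = T (-1) := by
    calc (v : Polynomial (LaurentPolynomial k)).coeff 0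
        = (T (-1) * T 1) * (v : Polynomial (LaurentPolynomial k)).coeff 0 := by
          rw [← T_add]; norm_num [T_zero]
      _ = T (-1) * (T 1 * (v : Polynomial (LaurentPolynomial k)).coeff 0) := mul_assoc _ _ _
      _ = T (-1) := by rw [h0, mul_one]
  have hmem := v.2 (-1) (by norm_num)
  rw [hv0, T_apply] at hmem
  simp at hmem

theorem model_not_atomic : ¬ AtomicRing (modelSubring k) := by
  classical
  intro hA
  have hX0 : (⟨X, X_mem_modelSubring⟩ : modelSubring k) ≠ 0 := by
    intro h
    exact Polynomial.X_ne_zero (congrArg (fun y : modelSubring k => (y : Polynomial (LaurentPolynomial k))) h)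
  have hXnu : ¬ IsUnit (⟨X, X_mem_modelSubring⟩ : modelSubring k) :=
    not_isUnit_of_coeff_zero _ Polynomial.coeff_X_zero
  obtain ⟨l, hirr, hprod⟩ := hA _ hX0 hXnu
  have hprodM : (l.map (fun y : modelSubring k => (y : Polynomial (LaurentPolynomial k)))).prod = X := by
    have := congrArg (fun y : modelSubring k => (y : Polynomial (LaurentPolynomial k))) hprod
    simpa [← map_multiset_prod (modelSubring k).subtype l] using this
  have hc0 : (0 : LaurentPolynomial k) ∈ l.map (fun y : modelSubring k =>
      ((y : Polynomial (LaurentPolynomial k)).coeff 0)) := by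
    have h1 : (l.map (fun y : modelSubring k =>
        ((y : Polynomial (LaurentPolynomial k)).coeff 0))).prod = 0 := by
      calc (l.map (fun y : modelSubring k =>
            ((y : Polynomial (LaurentPolynomial k)).coeff 0))).prod
          = ((l.map (fun y : modelSubring k => (y : Polynomial (LaurentPolynomial k)))).map
              (Polynomial.constantCoeff)).prod := by
            rw [Multiset.map_map]; rfl
        _ = Polynomial.constantCoeff ((l.map (fun y : modelSubring k =>
              (y : Polynomial (LaurentPolynomial k)))).prod) := (map_multiset_prod _ _).symm
        _ = 0 := by rw [hprodM]; simp [Polynomial.constantCoeff_apply]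
    rw [Multiset.prod_eq_zero_iff] at h1
    exact h1
  rw [Multiset.mem_map] at hc0
  obtain ⟨s, hsl, hs0⟩ := hc0
  set p := (s : Polynomial (LaurentPolynomial k)) with hp_def
  have hins : l = s ::ₘ l.erase s := (Multiset.cons_erase hsl).symm
  set d := ((l.erase s).map (fun y : modelSubring k =>
      (y : Polynomial (LaurentPolynomial k)))).prod with hd_def
  have hXpd : p * d = X := by
    rw [← hprodM]
    conv_rhs => rw [hins]
    rw [Multiset.map_cons, Multiset.prod_cons]
  have hp0 : p ≠ 0 := by
    intro h; rw [h, zero_mul] at hXpd; exact Polynomial.X_ne_zero hXpd.symm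
  have hd0 : d ≠ 0 := by
    intro h; rw [h, mul_zero] at hXpd; exact Polynomial.X_ne_zero hXpd.symm
  have hdeg : p.natDegree + d.natDegree = 1 := by
    have := congrArg Polynomial.natDegree hXpd
    rwa [Polynomial.natDegree_mul hp0 hd0, Polynomial.natDegree_X] at this
  have hdegle : p.natDegree ≤ 1 := by omega
  have hpb : p = Polynomial.C (p.coeff 1) * X := by
    have := Polynomial.eq_X_add_C_of_natDegree_le_one hdegle
    rwa [hs0, map_zero, add_zero] at this
  have hfact : s = (⟨Polynomial.C (T 1), CT_mem_modelSubring⟩ : modelSubring k) *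
      ⟨Polynomial.C (T (-1) * p.coeff 1) * X, CmulX_mem_modelSubring _⟩ := by
    apply Subtype.ext
    push_cast
    rw [← mul_assoc, ← Polynomial.C_mul, ← mul_assoc, ← T_add]
    norm_num [T_zero, ← hpb]
    exact hp_def.symm
  rcases (hirr s hsl).isUnit_or_isUnit hfact with h | h
  · exact not_isUnit_CT _ h
  · refine not_isUnit_of_coeff_zero _ ?_ h
    rw [Polynomial.mul_coeff_zero, Polynomial.coeff_X_zero, mul_zero]

end Model


noncomputable section Embed
variable (R : Type*) [CommRing R] [IsDomain R]

/-- The prime subring of `R`. -/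
def primeSubring : Subring R := (Int.castRingHom R).range

instance : Countable (primeSubring R) := by
  have h : (Set.range ((Int.castRingHom R))).Countable := Set.countable_range _
  rw [← RingHom.coe_range] at h
  exact h.to_subtype

instance : Countable (Polynomial (primeSubring R)) := by
  have : Function.Injective (fun p : Polynomial (primeSubring R) => p.toFinsupp) := fun a b h => by
    cases a; cases b; simpa using h
  have : Countable (AddMonoidAlgebra (primeSubring R) ℕ) :=
    AddMonoidAlgebra.coeff_injective.countable
  exact ‹Function.Injective _›.countable

instance : Countable (Polynomial (Polynomial (primeSubring R))) := by
  have : Function.Injective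
      (fun p : Polynomial (Polynomial (primeSubring R)) => p.toFinsupp) := fun a b h => by
    cases a; cases b; simpa using h
  have : Countable (AddMonoidAlgebra (Polynomial (primeSubring R)) ℕ) :=
    AddMonoidAlgebra.coeff_injective.countable
  exact ‹Function.Injective _›.countable

/-- The constants-to-power-series map. -/
def iota0 : (primeSubring R) →+* PowerSeries R :=
  (PowerSeries.C (R := R)).comp (primeSubring R).subtype

/-- Polynomials over the prime subring, evaluated at the power series variable. -/
def iota : Polynomial (primeSubring R) →+* PowerSeries R :=
  Polynomial.eval₂RingHom (iota0 R) PowerSeries.X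

lemma iota_eq : iota R = (Polynomial.coeToPowerSeries.ringHom).comp
    (Polynomial.mapRingHom (primeSubring R).subtype) := by
  apply Polynomial.ringHom_ext
  · intro a
    simp only [iota, iota0, Polynomial.coe_eval₂RingHom, Polynomial.eval₂_C, RingHom.comp_apply,
      Polynomial.coe_mapRingHom, Polynomial.map_C, Polynomial.coeToPowerSeries.ringHom_apply,
      Polynomial.coe_C]
  · simp only [iota, iota0, Polynomial.coe_eval₂RingHom, Polynomial.eval₂_X, RingHom.comp_apply,
      Polynomial.coe_mapRingHom, Polynomial.map_X, Polynomial.coeToPowerSeries.ringHom_apply,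
      Polynomial.coe_X]

lemma iota_injective : Function.Injective (iota R) := by
  rw [iota_eq]
  exact (Polynomial.coe_injective R).comp
    (Polynomial.map_injective _ (primeSubring R).subtype_injective)

/-- There is a power series with constant coefficient 1 that is "transcendental" in a
suitable sense over the prime subring together with `X`. -/
lemma exists_good_unit : ∃ u : PowerSeries R, PowerSeries.constantCoeff (R := R) u = 1 ∧
    ∀ q : Polynomial (Polynomial (primeSubring R)), q ≠ 0 →
      Polynomial.eval₂ (iota R) u q ≠ 0 := by
  classical
  set Bad : Set (PowerSeries R) :=
    ⋃ (q : {q : Polynomial (Polynomial (primeSubring R)) // q ≠ 0}),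
      {y | ((q : Polynomial (Polynomial (primeSubring R))).map (iota R)).IsRoot y} with hBad_def
  have hBadC : Bad.Countable := by
    apply Set.countable_iUnion
    intro q
    apply Set.Finite.countable
    apply Polynomial.finite_setOf_isRoot
    rw [Ne, Polynomial.map_eq_zero_iff (iota_injective R)]
    exact q.2
  set g : Set ℕ → PowerSeries R := fun s =>
    PowerSeries.mk (fun n => if n = 0 then 1 else if (n - 1) ∈ s then 1 else 0) with hg_def
  have hginj : Function.Injective g := by
    intro s t h
    ext m
    have := congrArg (fun y => PowerSeries.coeff (R := R) (m + 1) y) h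
    simp only [hg_def, PowerSeries.coeff_mk, Nat.add_sub_cancel, Nat.succ_ne_zero,
      if_false] at this
    constructor <;> intro hm
    · by_contra hm'
      rw [if_pos hm, if_neg hm'] at this; exact one_ne_zero this
    · by_contra hm'
      rw [if_neg hm', if_pos hm] at this; exact zero_ne_one this
  have hnotall : ¬ ∀ s : Set ℕ, g s ∈ Bad := by
    intro hall
    obtain ⟨f2, hf2⟩ := Set.countable_iff_exists_injective.mp hBadC
    exact Function.cantor_injective (fun s => f2 ⟨g s, hall s⟩)
      (hf2.comp (fun a b h => hginj (by simpa using congrArg Subtype.val h)))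
  push_neg at hnotall
  obtain ⟨s, hs⟩ := hnotall
  refine ⟨g s, ?_, ?_⟩
  · have : PowerSeries.coeff (R := R) 0 (g s) = 1 := by simp [hg_def]
    simpa [PowerSeries.coeff_zero_eq_constantCoeff] using this
  · intro q hq h0
    apply hs
    rw [hBad_def]
    apply Set.mem_iUnion.mpr
    refine ⟨⟨q, hq⟩, ?_⟩
    simp only [Set.mem_setOf_eq, Polynomial.IsRoot, Polynomial.eval_map]
    exact h0

end Embed

noncomputable section Embed2
variable (R : Type*) [CommRing R] [IsDomain R]

variable (U : (PowerSeries R)ˣ)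

/-- Evaluation of Laurent polynomials over the prime subring at the unit `U`. -/
def lam : LaurentPolynomial (primeSubring R) →+* PowerSeries R :=
  AddMonoidAlgebra.liftNCRingHom (iota0 R)
    ((Units.coeHom (PowerSeries R)).comp (zpowersHom (PowerSeries R)ˣ U))
    (fun _ _ => Commute.all _ _)

lemma lam_single (n : ℤ) (a : primeSubring R) :
    lam R U (AddMonoidAlgebra.single n a) = iota0 R a * ((U ^ n : (PowerSeries R)ˣ) : PowerSeries R) := by
  rw [lam]
  exact AddMonoidAlgebra.liftNCRingHom_single _ _ _ _ _

lemma lam_T (n : ℤ) : lam R U (T n) = ((U ^ n : (PowerSeries R)ˣ) : PowerSeries R) := by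
  rw [T, lam_single, map_one, one_mul]

lemma lam_C (a : primeSubring R) : lam R U (LaurentPolynomial.C a) = iota0 R a := by
  rw [← LaurentPolynomial.single_eq_C, lam_single]
  simp

/-- The main evaluation map from the model ring into the power series ring. -/
def psi : Polynomial (LaurentPolynomial (primeSubring R)) →+* PowerSeries R :=
  Polynomial.eval₂RingHom (lam R U) PowerSeries.X

/-- The swap map on polynomials in two variables. -/
def swapE : Polynomial (Polynomial (primeSubring R)) →+* Polynomial (Polynomial (primeSubring R)) :=
  Polynomial.eval₂RingHom
    (Polynomial.eval₂RingHom (Polynomial.C.comp Polynomial.C) Polynomial.X)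
    (Polynomial.C Polynomial.X)

lemma swapE_CC (a : primeSubring R) :
    swapE R (Polynomial.C (Polynomial.C a)) = Polynomial.C (Polynomial.C a) := by
  simp [swapE]

lemma swapE_CX : swapE R (Polynomial.C Polynomial.X) = Polynomial.X := by
  simp [swapE]

lemma swapE_X : swapE R Polynomial.X = Polynomial.C Polynomial.X := by
  simp [swapE]

lemma swapE_swapE : (swapE R).comp (swapE R) = RingHom.id _ := by
  apply Polynomial.ringHom_ext
  · intro a
    have h : ((swapE R).comp (swapE R)).comp (Polynomial.C) =
        (RingHom.id _).comp (Polynomial.C) := by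
      apply Polynomial.ringHom_ext
      · intro b
        simp [swapE_CC]
      · simp [swapE_CX, swapE_X]
    exact RingHom.congr_fun h a
  · simp [swapE_X, swapE_CX]

lemma swapE_injective : Function.Injective (swapE R) := by
  intro a b h
  have ha := RingHom.congr_fun (swapE_swapE R) a
  have hb := RingHom.congr_fun (swapE_swapE R) b
  simp only [RingHom.comp_apply, RingHom.id_apply] at ha hb
  rw [← ha, ← hb, h]

/-- Evaluation with outer variable `x`, inner variable `u`. -/
def evalXU : Polynomial (Polynomial (primeSubring R)) →+* PowerSeries R :=
  Polynomial.eval₂RingHom (Polynomial.eval₂RingHom (iota0 R) (U : PowerSeries R)) PowerSeries.X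

lemma evalXU_eq_swap : (Polynomial.eval₂RingHom (iota R) (U : PowerSeries R)).comp (swapE R)
    = evalXU R U := by
  apply Polynomial.ringHom_ext
  · intro a
    have h : ((Polynomial.eval₂RingHom (iota R) (U : PowerSeries R)).comp (swapE R)).comp
        (Polynomial.C) = (evalXU R U).comp (Polynomial.C) := by
      apply Polynomial.ringHom_ext
      · intro b
        simp [swapE_CC, evalXU, iota, iota0]
      · simp [swapE_CX, evalXU, iota]
    exact RingHom.congr_fun h a
  · simp [swapE_X, evalXU, iota]

lemma psi_comp_map : (psi R U).comp (Polynomial.mapRingHom Polynomial.toLaurent)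
    = evalXU R U := by
  apply Polynomial.ringHom_ext
  · intro a
    have h : ((psi R U).comp (Polynomial.mapRingHom Polynomial.toLaurent)).comp
        (Polynomial.C) = (evalXU R U).comp (Polynomial.C) := by
      apply Polynomial.ringHom_ext
      · intro b
        simp [psi, evalXU, Polynomial.toLaurent_C, lam_C]
      · simp [psi, evalXU, Polynomial.toLaurent_X, lam_T]
    exact RingHom.congr_fun h a
  · simp [psi, evalXU]

end Embed2

section Clear
variable {k : Type*} [CommRing k]
open Polynomial

/-- Clearing denominators: every polynomial over Laurent polynomials becomes polynomial
after multiplying by a power of `T`. -/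
lemma exists_clear_denominator (f : Polynomial (LaurentPolynomial k)) :
    ∃ (n : ℕ) (P : Polynomial (Polynomial k)),
      P.map Polynomial.toLaurent = Polynomial.C (T (n : ℤ)) * f := by
  induction f using Polynomial.induction_on' with
  | add p q hp hq =>
    obtain ⟨n1, P1, h1⟩ := hp
    obtain ⟨n2, P2, h2⟩ := hq
    refine ⟨n1 + n2, Polynomial.C (Polynomial.X ^ n2) * P1
      + Polynomial.C (Polynomial.X ^ n1) * P2, ?_⟩
    have hX : ∀ j : ℕ, (Polynomial.C (Polynomial.X ^ j : Polynomial k)).map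
        Polynomial.toLaurent = Polynomial.C (T (j : ℤ)) := by
      intro j
      rw [Polynomial.map_C, Polynomial.toLaurent_X_pow]
    rw [Polynomial.map_add, Polynomial.map_mul, Polynomial.map_mul, hX, hX, h1, h2,
      mul_add]
    push_cast
    rw [T_add, Polynomial.C_mul]
    ring
  | monomial i a =>
    obtain ⟨m, p, hp⟩ := a.exists_T_pow
    refine ⟨m, Polynomial.monomial i p, ?_⟩
    rw [Polynomial.map_monomial, hp, Polynomial.C_mul_monomial, mul_comm]

end Clear

section Inj
variable (R : Type*) [CommRing R] [IsDomain R]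

lemma exists_psi_injective : ∃ U : (PowerSeries R)ˣ, Function.Injective (psi R U) := by
  obtain ⟨u, hu1, hugood⟩ := exists_good_unit R
  have huu : IsUnit u := PowerSeries.isUnit_iff_constantCoeff.mpr (by rw [hu1]; exact isUnit_one)
  refine ⟨huu.unit, ?_⟩
  have hUu : ((huu.unit : (PowerSeries R)ˣ) : PowerSeries R) = u := rfl
  suffices key : ∀ f, psi R huu.unit f = 0 → f = 0 by
    intro a b hab
    have h1 : psi R huu.unit (a - b) = 0 := by
      have hms := (psi R huu.unit).map_sub a b
      rw [hms, hab, sub_self]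
    exact sub_eq_zero.mp (key _ h1)
  intro f hf
  by_contra hf0
  obtain ⟨n, P, hP⟩ := exists_clear_denominator f
  have hP0 : P ≠ 0 := by
    intro h
    rw [h, Polynomial.map_zero] at hP
    have hC : (Polynomial.C (T (n : ℤ)) : Polynomial (LaurentPolynomial (primeSubring R))) ≠ 0 := by
      rw [Ne, Polynomial.C_eq_zero]
      intro h'
      exact one_ne_zero (AddMonoidAlgebra.single_eq_zero.mp h')
    exact (mul_ne_zero hC hf0) hP.symm
  have hEP : swapE R P ≠ 0 := by
    intro h
    apply hP0
    apply swapE_injective R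
    rw [h, map_zero]
  have hgood := hugood (swapE R P) hEP
  have e1 : Polynomial.eval₂ (iota R) u (swapE R P) = evalXU R huu.unit P := by
    have := RingHom.congr_fun (evalXU_eq_swap R huu.unit) P
    simpa [hUu, Polynomial.coe_eval₂RingHom] using this
  have e2 : evalXU R huu.unit P = psi R huu.unit (P.map Polynomial.toLaurent) :=
    (RingHom.congr_fun (psi_comp_map R huu.unit) P).symm
  have e3 : psi R huu.unit (P.map Polynomial.toLaurent) = 0 := by
    rw [hP, map_mul, hf, mul_zero]
  exact hgood (by rw [e1, e2, e3])

end Inj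

lemma irreducible_of_ringEquiv {A B : Type*} [CommRing A] [CommRing B] (e : A ≃+* B)
    {a : A} (ha : Irreducible a) : Irreducible (e a) := by
  constructor
  · intro hu
    exact ha.not_isUnit (by simpa using hu.map e.symm)
  · intro x y hxy
    have hxy' : a = e.symm x * e.symm y := by
      have := congrArg e.symm hxy
      simpa using this
    rcases ha.isUnit_or_isUnit hxy' with h | h
    · left; simpa using h.map e
    · right; simpa using h.map e

lemma atomicRing_of_ringEquiv {A B : Type*} [CommRing A] [CommRing B] (e : A ≃+* B)
    (h : AtomicRing A) : AtomicRing B := by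
  intro b hb0 hbu
  obtain ⟨l, hl, hlp⟩ := h (e.symm b)
    (by intro h0; apply hb0; have := congrArg e h0; simpa using this)
    (fun hu => hbu (by simpa using hu.map e))
  refine ⟨l.map e, ?_, ?_⟩
  · intro c hc
    rw [Multiset.mem_map] at hc
    obtain ⟨a, ha, rfl⟩ := hc
    exact irreducible_of_ringEquiv e (hl a ha)
  · have hme : Multiset.map (⇑e) l = Multiset.map (⇑(e : A →+* B)) l := rfl
    rw [hme, ← map_multiset_prod, hlp]
    simp



/-- For any integral domain R, the power series ring R⟦x⟧ is not hereditarily atomic: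
it contains a subring that is not atomic. -/
theorem powerSeries_not_hereditarily_atomic (R : Type*) [CommRing R] [IsDomain R] :
    ∃ S : Subring (PowerSeries R), ¬ AtomicRing S := by
  obtain ⟨U, hU⟩ := exists_psi_injective R
  refine ⟨(modelSubring (primeSubring R)).map (psi R U), ?_⟩
  intro hA
  apply model_not_atomic (k := primeSubring R)
  have e := Subring.equivMapOfInjective (modelSubring (primeSubring R)) (psi R U) hU
  exact atomicRing_of_ringEquiv e.symm hA
end

section
/- Let R be an integral domain and let S = {z ∈ R \ {0} : (z) = R or there is an infinite strictly ascending chain of principal ideals starting from (z)}. If S is a saturated multiplicative subset of R containing a nonunit, then R is not atomic. -/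
/-- If the set of z ∈ R \ {0} such that (z) = R or there is an infinite strictly
ascending chain of principal ideals starting at (z) is a saturated multiplicative
subset of R containing a nonunit, then R is not atomic. -/
theorem not_atomic_of_saturated_ascending (R : Type*) [CommRing R] [IsDomain R]
    (S : Set R)
    (hS : S = {z : R | z ≠ 0 ∧ (Ideal.span {z} = ⊤ ∨
      ∃ c : ℕ → R, c 0 = z ∧ ∀ n, Ideal.span {c n} < Ideal.span {c (n + 1)})})
    (hmul : ∀ a b : R, a ∈ S → b ∈ S → a * b ∈ S)
    (hsat : ∀ a b : R, a * b ∈ S → a ∈ S ∧ b ∈ S)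
    (hnonunit : ∃ z ∈ S, ¬IsUnit z) :
    ¬ AtomicRing R := by
  intro hat
  obtain ⟨z, hzS, hzu⟩ := hnonunit
  have hz0 : z ≠ 0 := by rw [hS] at hzS; exact hzS.1
  obtain ⟨l, hirr, hprod⟩ := hat z hz0 hzu
  -- l is nonempty
  obtain ⟨p, hpl⟩ : ∃ p, p ∈ l := by
    by_contra h
    push_neg at h
    have : l = 0 := Multiset.eq_zero_of_forall_notMem h
    rw [this] at hprod
    exact hzu (hprod ▸ isUnit_one)
  obtain ⟨t, rfl⟩ := Multiset.exists_cons_of_mem hpl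
  rw [Multiset.prod_cons] at hprod
  have hpS : p ∈ S := (hsat p t.prod (hprod ▸ hzS)).1
  have hp : Irreducible p := hirr p (Multiset.mem_cons_self p t)
  rw [hS] at hpS
  rcases hpS.2 with htop | ⟨c, hc0, hchain⟩
  · exact hp.not_isUnit ((Ideal.span_singleton_eq_top).mp htop)
  · have h01 := hchain 0
    rw [hc0] at h01
    have hd : DvdNotUnit (c 1) p := Ideal.span_singleton_lt_span_singleton.mp h01
    obtain ⟨hc1, d, hdu, hpd⟩ := hd
    have hu1 : IsUnit (c 1) := (hp.isUnit_or_isUnit hpd).resolve_right hdu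
    have h12 := hchain 1
    rw [Ideal.span_singleton_eq_top.mpr hu1] at h12
    exact absurd (le_top : Ideal.span {c 2} ≤ ⊤) (not_le_of_gt h12)
end
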